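/- arXiv:1608.02017 — 5 statements merged into one kernel-verified Lean document; each statement's English description precedes it below -/
import Mathlib

section
/- Let W be a real Hilbert space, J : W×W→ℝ a continuous symmetric bilinear form, and V ⊆ W a closed subspace of finite codimension. Then J is coercive on W if and only if J is coercive on V and J(δ,δ)>0 for every nonzero δ∈W which is J-orthogonal to V. (Proposition of Section 4.2, after Hestenes.) -/
/-!
Coercivity on `V` makes the restriction of `J` to `V` a coercive form on the Hilbert space `V`,
so by Lax–Milgram every `w` splits as `p + u` with `p ∈ V` and `u` `J`-orthogonal to `V`.
The `J`-orthogonal complement meets `V` trivially, hence embeds in `W ⧸ V` and is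
finite-dimensional; there `J` is positive definite, hence coercive by compactness of the unit
sphere. The two coercivity bounds combine because `J (p + u) (p + u) = J p p + J u u` and
`‖p + u‖ ^ 2 ≤ 2 * (‖p‖ ^ 2 + ‖u‖ ^ 2)`.
-/

def IsCoerciveOn {W : Type*} [SeminormedAddCommGroup W] [NormedSpace ℝ W]
    (J : W →L[ℝ] W →L[ℝ] ℝ) (S : Submodule ℝ W) : Prop :=
  ∃ ρ > 0, ∀ δ ∈ S, ρ * ‖δ‖ ^ 2 ≤ J δ δ

def jOrthogonal {W : Type*} [SeminormedAddCommGroup W] [NormedSpace ℝ W]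
    (J : W →L[ℝ] W →L[ℝ] ℝ) (V : Submodule ℝ W) : Submodule ℝ W where
  carrier := {δ | ∀ v ∈ V, J δ v = 0}
  add_mem' ha hb v hv := by simp [ha v hv, hb v hv]
  zero_mem' v _ := by simp
  smul_mem' c _ hx v hv := by simp [hx v hv]

section

variable {W : Type*}

namespace IsCoerciveOn

theorem mono [SeminormedAddCommGroup W] [NormedSpace ℝ W] {J : W →L[ℝ] W →L[ℝ] ℝ}
    {S T : Submodule ℝ W} (hT : IsCoerciveOn J T) (hST : S ≤ T) : IsCoerciveOn J S :=
  let ⟨ρ, hρ, h⟩ := hT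
  ⟨ρ, hρ, fun δ hδ => h δ (hST hδ)⟩

theorem pos [NormedAddCommGroup W] [NormedSpace ℝ W] {J : W →L[ℝ] W →L[ℝ] ℝ}
    {S : Submodule ℝ W} (hS : IsCoerciveOn J S) {δ : W} (hδS : δ ∈ S) (hδ : δ ≠ 0) :
    0 < J δ δ := by
  obtain ⟨ρ, hρ, h⟩ := hS
  have : 0 < ‖δ‖ := norm_pos_iff.mpr hδ
  exact (by positivity : 0 < ρ * ‖δ‖ ^ 2).trans_le (h δ hδS)

theorem disjoint_jOrthogonal [NormedAddCommGroup W] [NormedSpace ℝ W]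
    {J : W →L[ℝ] W →L[ℝ] ℝ} {V : Submodule ℝ W} (hV : IsCoerciveOn J V) :
    Disjoint (jOrthogonal J V) V := by
  refine Submodule.disjoint_def.mpr fun δ hδU hδV => ?_
  by_contra hδ
  exact (hV.pos hδV hδ).ne' (hδU δ hδV)

theorem finiteDimensional_jOrthogonal [NormedAddCommGroup W] [NormedSpace ℝ W]
    {J : W →L[ℝ] W →L[ℝ] ℝ} {V : Submodule ℝ W} [FiniteDimensional ℝ (W ⧸ V)]
    (hV : IsCoerciveOn J V) : FiniteDimensional ℝ (jOrthogonal J V) :=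
  .of_injective (V.mkQ.domRestrict _) <| by
    rw [LinearMap.injective_domRestrict_iff, Submodule.ker_mkQ]
    exact hV.disjoint_jOrthogonal

theorem of_finiteDimensional [NormedAddCommGroup W] [NormedSpace ℝ W]
    {J : W →L[ℝ] W →L[ℝ] ℝ} {U : Submodule ℝ W} [FiniteDimensional ℝ U]
    (hU : ∀ δ ∈ U, δ ≠ 0 → 0 < J δ δ) : IsCoerciveOn J U := by
  rcases subsingleton_or_nontrivial U with _ | _
  · refine ⟨1, one_pos, fun δ hδ => ?_⟩
    obtain rfl : δ = 0 := congrArg Subtype.val (Subsingleton.elim (⟨δ, hδ⟩ : U) 0)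
    simp
  have hq : Continuous fun u : U => J u u := by fun_prop
  obtain ⟨e, he, hmin⟩ := (isCompact_sphere (0 : U) 1).exists_isMinOn
    (NormedSpace.sphere_nonempty.mpr zero_le_one) hq.continuousOn
  refine ⟨J e e, hU e e.2 ?_, fun δ hδ => ?_⟩
  · simpa using ne_zero_of_mem_unit_sphere ⟨e, he⟩
  rcases eq_or_ne δ 0 with rfl | hδ0
  · simp
  have hscaled : J e e ≤ ‖δ‖⁻¹ * (‖δ‖⁻¹ * J δ δ) := by
    simpa using hmin (a := ‖δ‖⁻¹ • ⟨δ, hδ⟩) (by simp [norm_smul, hδ0])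
  calc J e e * ‖δ‖ ^ 2 ≤ ‖δ‖⁻¹ * (‖δ‖⁻¹ * J δ δ) * ‖δ‖ ^ 2 := by gcongr
    _ = J δ δ := by field_simp

theorem sup [SeminormedAddCommGroup W] [NormedSpace ℝ W] {J : W →L[ℝ] W →L[ℝ] ℝ}
    {V U : Submodule ℝ W} (hV : IsCoerciveOn J V) (hU : IsCoerciveOn J U)
    (horth : ∀ v ∈ V, ∀ u ∈ U, J v u = 0 ∧ J u v = 0) : IsCoerciveOn J (V ⊔ U) := by
  obtain ⟨ρ, hρ, hρV⟩ := hV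
  obtain ⟨c, hc, hcU⟩ := hU
  refine ⟨min ρ c / 2, by positivity, fun δ hδ => ?_⟩
  obtain ⟨v, hv, u, hu, rfl⟩ := Submodule.mem_sup.mp hδ
  obtain ⟨hvu, huv⟩ := horth v hv u hu
  have hnorm : ‖v + u‖ ^ 2 ≤ 2 * (‖v‖ ^ 2 + ‖u‖ ^ 2) := by
    nlinarith [norm_add_le v u, norm_nonneg (v + u), two_mul_le_add_sq ‖v‖ ‖u‖]
  calc min ρ c / 2 * ‖v + u‖ ^ 2 ≤ min ρ c * ‖v‖ ^ 2 + min ρ c * ‖u‖ ^ 2 := by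
        nlinarith [lt_min hρ hc]
    _ ≤ ρ * ‖v‖ ^ 2 + c * ‖u‖ ^ 2 := by gcongr <;> simp
    _ ≤ J v v + J u u := add_le_add (hρV v hv) (hcU u hu)
    _ = J (v + u) (v + u) := by simp [hvu, huv]

theorem sup_jOrthogonal_eq_top [NormedAddCommGroup W] [InnerProductSpace ℝ W]
    {J : W →L[ℝ] W →L[ℝ] ℝ} {V : Submodule ℝ W} [CompleteSpace V] (hV : IsCoerciveOn J V) :
    V ⊔ jOrthogonal J V = ⊤ := by
  refine eq_top_iff.mpr fun w _ => ?_
  obtain ⟨ρ, hρ, h⟩ := hV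
  let B : V →L[ℝ] V →L[ℝ] ℝ := J.bilinearComp V.subtypeL V.subtypeL
  have hB : IsCoercive B := ⟨ρ, hρ, fun u => by simpa [B, sq, mul_assoc] using h u u.2⟩
  let p : V := hB.continuousLinearEquivOfBilin.symm
    ((InnerProductSpace.toDual ℝ V).symm ((J w).comp V.subtypeL))
  have hp : ∀ v : V, J p v = J w v := fun v => by
    have := hB.continuousLinearEquivOfBilin_apply p v
    simpa [p, B] using this.symm
  exact Submodule.mem_sup.mpr ⟨p, p.2, w - p, fun v hv => by simp [hp ⟨v, hv⟩], by abel⟩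

end IsCoerciveOn

end

/-- **Hestenes' proposition** (Section 4.2): a continuous symmetric bilinear form `J` on a
real Hilbert space `W` is coercive if and only if it is coercive on a closed subspace `V`
of finite codimension and positive on the nonzero vectors that are `J`-orthogonal to `V`. -/
theorem coercive_iff_coercive_on_finite_codim_subspace_and_pos_on_Jorthogonal
    {W : Type*} [NormedAddCommGroup W] [InnerProductSpace ℝ W] [CompleteSpace W]
    (J : W →L[ℝ] W →L[ℝ] ℝ) (hJsymm : ∀ x y : W, J x y = J y x)
    (V : Submodule ℝ W) (hVclosed : IsClosed (V : Set W))
    (hVcodim : FiniteDimensional ℝ (W ⧸ V)) :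
    (∃ ρ > 0, ∀ δ : W, ρ * ‖δ‖ ^ 2 ≤ J δ δ) ↔
      ((∃ ρ > 0, ∀ δ ∈ V, ρ * ‖δ‖ ^ 2 ≤ J δ δ) ∧
        ∀ δ : W, δ ≠ 0 → (∀ v ∈ V, J δ v = 0) → 0 < J δ δ) := by
  constructor
  · rintro ⟨ρ, hρ, h⟩
    have hW : IsCoerciveOn J ⊤ := ⟨ρ, hρ, fun δ _ => h δ⟩
    exact ⟨hW.mono le_top, fun δ hδ _ => hW.pos trivial hδ⟩
  · rintro ⟨hV, hpos⟩
    replace hV : IsCoerciveOn J V := hV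
    have : CompleteSpace V := hVclosed.completeSpace_coe
    have : FiniteDimensional ℝ (jOrthogonal J V) := hV.finiteDimensional_jOrthogonal
    have hU : IsCoerciveOn J (jOrthogonal J V) :=
      .of_finiteDimensional fun δ hδ h0 => hpos δ h0 hδ
    have hW := hV.sup hU fun v hv u hu => ⟨(hJsymm v u).trans (hu v hv), hu v hv⟩
    rw [hV.sup_jOrthogonal_eq_top] at hW
    obtain ⟨ρ, hρ, h⟩ := hW
    exact ⟨ρ, hρ, fun δ => h δ trivial⟩
end

section
/- With the data of the context (𝔏 := {F₁,{H₂,F₁}} > 0 on Ω, Φ the local flow of ⃗F₁, θ the fiberwise time with H₂₃(Φ(θ(ℓ),ℓ))=0 and θ=0 on {H₂₃=0}, and H̃₂(ℓ):=H₂(Φ(θ(ℓ),ℓ))): H̃₂(ℓ) ≥ H₂(ℓ) for every ℓ∈Ω₀, and equality holds if and only if H₂₃(ℓ)=0. (Lemma 4.1, item 1.) -/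
open Set
open scoped InnerProductSpace

noncomputable section

/-- Base space `ℝⁿ`. -/
abbrev E (n : ℕ) := EuclideanSpace ℝ (Fin n)

/-- Phase space `T*ℝⁿ ≃ ℝⁿ × ℝⁿ`, points `ℓ = (p,x)`. -/
abbrev P (n : ℕ) := E n × E n

/-- Partial gradient `∂ₚH`. -/
def gradP {n : ℕ} (H : P n → ℝ) (ℓ : P n) : E n :=
  gradient (fun p => H (p, ℓ.2)) ℓ.1

/-- Partial gradient `∂ₓH`. -/
def gradX {n : ℕ} (H : P n → ℝ) (ℓ : P n) : E n :=
  gradient (fun x => H (ℓ.1, x)) ℓ.2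

/-- Poisson bracket `{F,G} = ⟨∂ₚF,∂ₓG⟩ − ⟨∂ₓF,∂ₚG⟩`. -/
def poisson {n : ℕ} (F G : P n → ℝ) (ℓ : P n) : ℝ :=
  ⟪gradP F ℓ, gradX G ℓ⟫_ℝ - ⟪gradX F ℓ, gradP G ℓ⟫_ℝ

/-- Hamiltonian vector field `⃗H = (−∂ₓH, ∂ₚH)`. -/
def hamVF {n : ℕ} (H : P n → ℝ) (ℓ : P n) : P n :=
  (-gradX H ℓ, gradP H ℓ)

/-! ### Auxiliary lemmas -/

lemma hasFDerivAt_partP {n : ℕ} {G : P n → ℝ} {z : P n} (hG : DifferentiableAt ℝ G z) :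
    HasFDerivAt (fun p => G (p, z.2))
      ((fderiv ℝ G z).comp (ContinuousLinearMap.inl ℝ (E n) (E n))) z.1 :=
  hG.hasFDerivAt.comp z.1 (hasFDerivAt_prodMk_left z.1 z.2)

lemma hasFDerivAt_partX {n : ℕ} {G : P n → ℝ} {z : P n} (hG : DifferentiableAt ℝ G z) :
    HasFDerivAt (fun x => G (z.1, x))
      ((fderiv ℝ G z).comp (ContinuousLinearMap.inr ℝ (E n) (E n))) z.2 :=
  hG.hasFDerivAt.comp z.2 (hasFDerivAt_prodMk_right z.1 z.2)

lemma fderiv_eq_grads {n : ℕ} {G : P n → ℝ} {z : P n} (hG : DifferentiableAt ℝ G z)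
    (v : P n) :
    fderiv ℝ G z v = ⟪gradP G z, v.1⟫_ℝ + ⟪gradX G z, v.2⟫_ℝ := by
  have h1 : ⟪gradP G z, v.1⟫_ℝ = fderiv ℝ G z (v.1, 0) := by
    rw [gradP, gradient, (hasFDerivAt_partP hG).fderiv,
      InnerProductSpace.toDual_symm_apply]
    rfl
  have h2 : ⟪gradX G z, v.2⟫_ℝ = fderiv ℝ G z (0, v.2) := by
    rw [gradX, gradient, (hasFDerivAt_partX hG).fderiv,
      InnerProductSpace.toDual_symm_apply]
    rfl
  rw [h1, h2, ← map_add]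
  congr 1
  exact Prod.ext (by simp) (by simp)

lemma fderiv_hamVF {n : ℕ} (F : P n → ℝ) {G : P n → ℝ} {z : P n}
    (hG : DifferentiableAt ℝ G z) :
    fderiv ℝ G z (hamVF F z) = poisson F G z := by
  rw [fderiv_eq_grads hG]
  simp only [hamVF, poisson, inner_neg_right]
  rw [real_inner_comm (gradP G z) (gradX F z), real_inner_comm (gradX G z) (gradP F z)]
  ring

lemma poisson_anti {n : ℕ} (F G : P n → ℝ) (z : P n) :
    poisson F G z = -poisson G F z := by
  simp only [poisson]
  rw [real_inner_comm (gradP F z) (gradX G z), real_inner_comm (gradX F z) (gradP G z)]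
  ring

lemma toDual_symm_isBoundedLinearMap {n : ℕ} :
    IsBoundedLinearMap ℝ
      (fun y : StrongDual ℝ (E n) => (InnerProductSpace.toDual ℝ (E n)).symm y) := by
  refine ⟨⟨fun x y => map_add _ _ _, fun c x => ?_⟩, 1, one_pos, fun x => ?_⟩
  · rw [LinearIsometryEquiv.map_smulₛₗ]
    norm_num
  · rw [LinearIsometryEquiv.norm_map, one_mul]

lemma toDual_symm_contDiff {n : ℕ} :
    ContDiff ℝ 1
      (fun y : StrongDual ℝ (E n) => (InnerProductSpace.toDual ℝ (E n)).symm y) :=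
  toDual_symm_isBoundedLinearMap.contDiff

lemma gradP_contDiffOn {n : ℕ} {Ω : Set (P n)} (hΩ : IsOpen Ω) {H : P n → ℝ}
    (hH : ContDiffOn ℝ (⊤ : ℕ∞) H Ω) : ContDiffOn ℝ 1 (gradP H) Ω := by
  have hfd : ContDiffOn ℝ 1 (fderiv ℝ H) Ω := hH.fderiv_of_isOpen hΩ (WithTop.coe_le_coe.mpr le_top)
  have hout : ContDiff ℝ 1 (fun L : P n →L[ℝ] ℝ =>
      (InnerProductSpace.toDual ℝ (E n)).symm
        (L.comp (ContinuousLinearMap.inl ℝ (E n) (E n)))) := by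
    have h1 : ContDiff ℝ 1 (fun L : P n →L[ℝ] ℝ =>
        (ContinuousLinearMap.compL ℝ (E n) (P n) ℝ).flip
          (ContinuousLinearMap.inl ℝ (E n) (E n)) L) :=
      ((ContinuousLinearMap.compL ℝ (E n) (P n) ℝ).flip
        (ContinuousLinearMap.inl ℝ (E n) (E n))).contDiff
    exact toDual_symm_contDiff.comp h1
  have key : ContDiffOn ℝ 1 (fun z => (InnerProductSpace.toDual ℝ (E n)).symm
      ((fderiv ℝ H z).comp (ContinuousLinearMap.inl ℝ (E n) (E n)))) Ω :=
    hout.comp_contDiffOn hfd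
  refine key.congr fun z hz => ?_
  have hG : DifferentiableAt ℝ H z :=
    (hH.differentiableOn (by simp)).differentiableAt (hΩ.mem_nhds hz)
  rw [gradP, gradient, (hasFDerivAt_partP hG).fderiv]

lemma gradX_contDiffOn {n : ℕ} {Ω : Set (P n)} (hΩ : IsOpen Ω) {H : P n → ℝ}
    (hH : ContDiffOn ℝ (⊤ : ℕ∞) H Ω) : ContDiffOn ℝ 1 (gradX H) Ω := by
  have hfd : ContDiffOn ℝ 1 (fderiv ℝ H) Ω := hH.fderiv_of_isOpen hΩ (WithTop.coe_le_coe.mpr le_top)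
  have hout : ContDiff ℝ 1 (fun L : P n →L[ℝ] ℝ =>
      (InnerProductSpace.toDual ℝ (E n)).symm
        (L.comp (ContinuousLinearMap.inr ℝ (E n) (E n)))) := by
    have h1 : ContDiff ℝ 1 (fun L : P n →L[ℝ] ℝ =>
        (ContinuousLinearMap.compL ℝ (E n) (P n) ℝ).flip
          (ContinuousLinearMap.inr ℝ (E n) (E n)) L) :=
      ((ContinuousLinearMap.compL ℝ (E n) (P n) ℝ).flip
        (ContinuousLinearMap.inr ℝ (E n) (E n))).contDiff
    exact toDual_symm_contDiff.comp h1
  have key : ContDiffOn ℝ 1 (fun z => (InnerProductSpace.toDual ℝ (E n)).symm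
      ((fderiv ℝ H z).comp (ContinuousLinearMap.inr ℝ (E n) (E n)))) Ω :=
    hout.comp_contDiffOn hfd
  refine key.congr fun z hz => ?_
  have hG : DifferentiableAt ℝ H z :=
    (hH.differentiableOn (by simp)).differentiableAt (hΩ.mem_nhds hz)
  rw [gradX, gradient, (hasFDerivAt_partX hG).fderiv]

lemma poisson_contDiffOn {n : ℕ} {Ω : Set (P n)} (hΩ : IsOpen Ω) {F G : P n → ℝ}
    (hF : ContDiffOn ℝ (⊤ : ℕ∞) F Ω) (hG : ContDiffOn ℝ (⊤ : ℕ∞) G Ω) :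
    ContDiffOn ℝ 1 (poisson F G) Ω := by
  exact (ContDiffOn.inner (𝕜 := ℝ) (gradP_contDiffOn hΩ hF) (gradX_contDiffOn hΩ hG)).sub
    (ContDiffOn.inner (𝕜 := ℝ) (gradX_contDiffOn hΩ hF) (gradP_contDiffOn hΩ hG))

/-- **Lemma 4.1, item 1**: `H̃₂(ℓ) := H₂(Φ(θ(ℓ),ℓ)) ≥ H₂(ℓ)` on `Ω₀`, with equality if and
only if `H₂₃(ℓ) = 0`. -/
theorem overmaximised_hamiltonian_ge {n : ℕ}
    (Ω Ω₀ : Set (P n)) (hΩ : IsOpen Ω) (hΩ₀ : IsOpen Ω₀) (hΩ₀Ω : Ω₀ ⊆ Ω)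
    (H2 F1 : P n → ℝ) (hH2 : ContDiffOn ℝ (⊤ : ℕ∞) H2 Ω) (hF1 : ContDiffOn ℝ (⊤ : ℕ∞) F1 Ω)
    (hL : ∀ ℓ ∈ Ω, 0 < poisson F1 (poisson H2 F1) ℓ)
    (ε : ℝ) (hε : 0 < ε)
    (Φ : ℝ → P n → P n)
    (hΦsm : ContDiffOn ℝ (⊤ : ℕ∞) (fun q : ℝ × P n => Φ q.1 q.2) (Ioo (-ε) ε ×ˢ Ω₀))
    (hΦ0 : ∀ ℓ ∈ Ω₀, Φ 0 ℓ = ℓ)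
    (hΦin : ∀ ℓ ∈ Ω₀, ∀ s ∈ Ioo (-ε) ε, Φ s ℓ ∈ Ω)
    (hΦflow : ∀ ℓ ∈ Ω₀, ∀ s ∈ Ioo (-ε) ε,
      HasDerivAt (fun r => Φ r ℓ) (hamVF F1 (Φ s ℓ)) s)
    (θ : P n → ℝ) (hθsm : ContDiffOn ℝ (⊤ : ℕ∞) θ Ω₀)
    (hθrange : ∀ ℓ ∈ Ω₀, θ ℓ ∈ Ioo (-ε) ε)
    (hθ : ∀ ℓ ∈ Ω₀, poisson H2 F1 (Φ (θ ℓ) ℓ) = 0)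
    (hθ0 : ∀ ℓ ∈ Ω₀, poisson H2 F1 ℓ = 0 → θ ℓ = 0) :
    ∀ ℓ ∈ Ω₀, H2 ℓ ≤ H2 (Φ (θ ℓ) ℓ) ∧
      (H2 (Φ (θ ℓ) ℓ) = H2 ℓ ↔ poisson H2 F1 ℓ = 0) := by
  have hH23 : ContDiffOn ℝ 1 (poisson H2 F1) Ω := poisson_contDiffOn hΩ hH2 hF1
  intro ℓ hℓ
  have ht : θ ℓ ∈ Ioo (-ε) ε := hθrange ℓ hℓ
  have h0 : (0:ℝ) ∈ Ioo (-ε) ε := ⟨neg_lt_zero.mpr hε, hε⟩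
  -- derivative of `s ↦ poisson H2 F1 (Φ s ℓ)`
  have hderh : ∀ s ∈ Ioo (-ε) ε, HasDerivAt (fun r => poisson H2 F1 (Φ r ℓ))
      (poisson F1 (poisson H2 F1) (Φ s ℓ)) s := by
    intro s hs
    have hz : Φ s ℓ ∈ Ω := hΦin ℓ hℓ s hs
    have hG : DifferentiableAt ℝ (poisson H2 F1) (Φ s ℓ) :=
      (hH23.differentiableOn one_ne_zero).differentiableAt (hΩ.mem_nhds hz)
    have := hG.hasFDerivAt.comp_hasDerivAt s (hΦflow ℓ hℓ s hs)
    rwa [fderiv_hamVF F1 hG] at this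
  -- derivative of `s ↦ H2 (Φ s ℓ)`
  have hderg : ∀ s ∈ Ioo (-ε) ε, HasDerivAt (fun r => H2 (Φ r ℓ))
      (-(poisson H2 F1 (Φ s ℓ))) s := by
    intro s hs
    have hz : Φ s ℓ ∈ Ω := hΦin ℓ hℓ s hs
    have hG : DifferentiableAt ℝ H2 (Φ s ℓ) :=
      (hH2.differentiableOn (by simp)).differentiableAt (hΩ.mem_nhds hz)
    have := hG.hasFDerivAt.comp_hasDerivAt s (hΦflow ℓ hℓ s hs)
    rwa [fderiv_hamVF F1 hG, poisson_anti] at this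
  -- `s ↦ poisson H2 F1 (Φ s ℓ)` is strictly monotone on the interval
  have hmono : StrictMonoOn (fun s => poisson H2 F1 (Φ s ℓ)) (Ioo (-ε) ε) := by
    refine strictMonoOn_of_deriv_pos (convex_Ioo _ _)
      (fun s hs => (hderh s hs).continuousAt.continuousWithinAt) (fun s hs => ?_)
    rw [interior_Ioo] at hs
    rw [(hderh s hs).deriv]
    exact hL _ (hΦin ℓ hℓ s hs)
  have hht : poisson H2 F1 (Φ (θ ℓ) ℓ) = 0 := hθ ℓ hℓ
  -- strict inequality when `θ ℓ ≠ 0`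
  have fact1 : θ ℓ ≠ 0 → H2 ℓ < H2 (Φ (θ ℓ) ℓ) := by
    intro hne
    rcases hne.lt_or_gt with hlt | hgt
    · -- θ ℓ < 0 : strictly decreasing on `Icc (θ ℓ) 0`
      have hsub : Icc (θ ℓ) 0 ⊆ Ioo (-ε) ε := Icc_subset_Ioo ht.1 h0.2
      have hanti : StrictAntiOn (fun s => H2 (Φ s ℓ)) (Icc (θ ℓ) 0) := by
        refine strictAntiOn_of_deriv_neg (convex_Icc _ _)
          (fun s hs => ((hderg s (hsub hs)).continuousAt).continuousWithinAt)
          (fun s hs => ?_)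
        rw [interior_Icc] at hs
        have hs' : s ∈ Ioo (-ε) ε := hsub (Ioo_subset_Icc_self hs)
        rw [(hderg s hs').deriv, neg_lt_zero]
        have h2 : poisson H2 F1 (Φ (θ ℓ) ℓ) < poisson H2 F1 (Φ s ℓ) := hmono ht hs' hs.1
        rwa [hht] at h2
      have := hanti (left_mem_Icc.mpr hlt.le) (right_mem_Icc.mpr hlt.le) hlt
      simpa [hΦ0 ℓ hℓ] using this
    · -- 0 < θ ℓ : strictly increasing on `Icc 0 (θ ℓ)`
      have hsub : Icc 0 (θ ℓ) ⊆ Ioo (-ε) ε := Icc_subset_Ioo h0.1 ht.2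
      have hmon : StrictMonoOn (fun s => H2 (Φ s ℓ)) (Icc 0 (θ ℓ)) := by
        refine strictMonoOn_of_deriv_pos (convex_Icc _ _)
          (fun s hs => ((hderg s (hsub hs)).continuousAt).continuousWithinAt)
          (fun s hs => ?_)
        rw [interior_Icc] at hs
        have hs' : s ∈ Ioo (-ε) ε := hsub (Ioo_subset_Icc_self hs)
        rw [(hderg s hs').deriv, neg_pos]
        have h2 : poisson H2 F1 (Φ s ℓ) < poisson H2 F1 (Φ (θ ℓ) ℓ) := hmono hs' ht hs.2
        rwa [hht] at h2
      have := hmon (left_mem_Icc.mpr hgt.le) (right_mem_Icc.mpr hgt.le) hgt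
      simpa [hΦ0 ℓ hℓ] using this
  have fact2 : θ ℓ = 0 → H2 (Φ (θ ℓ) ℓ) = H2 ℓ := by
    intro h; rw [h, hΦ0 ℓ hℓ]
  constructor
  · by_cases hc : θ ℓ = 0
    · exact (fact2 hc).ge
    · exact (fact1 hc).le
  · constructor
    · intro heq
      by_cases hc : θ ℓ = 0
      · have := hht
        rwa [hc, hΦ0 ℓ hℓ] at this
      · exact absurd heq (fact1 hc).ne'
    · intro hp
      exact fact2 (hθ0 ℓ hℓ hp)
end
end

section
/- With the data of the context, let υ̂:[τ̂₂,T]→(0,1) be measurable and set H_t := H̃₂ + υ̂(t)F₁. If λ̂:[τ̂₂,T]→Ω₀ is absolutely continuous, solves λ̂'(t) = ⃗H₂(λ̂(t)) + υ̂(t)⃗F₁(λ̂(t)) for a.e. t, and satisfies H₂₃(λ̂(t))=0 for all t∈[τ̂₂,T], then λ̂ also solves λ̂'(t) = ⃗H_t(λ̂(t)) for a.e. t∈[τ̂₂,T]. (Lemma 4.1, item 4.) -/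
open MeasureTheory Set
open scoped InnerProductSpace

noncomputable section

noncomputable section

section Aux

variable {n : ℕ}

lemma hasFDerivAt_partialP {H : P n → ℝ} {D : P n →L[ℝ] ℝ} {ℓ : P n}
    (h : HasFDerivAt H D ℓ) :
    HasFDerivAt (fun p => H (p, ℓ.2)) (D.comp (ContinuousLinearMap.inl ℝ (E n) (E n))) ℓ.1 :=
  h.comp ℓ.1 (hasFDerivAt_prodMk_left ℓ.1 ℓ.2)

lemma hasFDerivAt_partialX {H : P n → ℝ} {D : P n →L[ℝ] ℝ} {ℓ : P n}
    (h : HasFDerivAt H D ℓ) :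
    HasFDerivAt (fun x => H (ℓ.1, x)) (D.comp (ContinuousLinearMap.inr ℝ (E n) (E n))) ℓ.2 :=
  h.comp ℓ.2 (hasFDerivAt_prodMk_right ℓ.1 ℓ.2)

lemma inner_gradP_eq {H : P n → ℝ} {D : P n →L[ℝ] ℝ} {ℓ : P n}
    (h : HasFDerivAt H D ℓ) (a : E n) :
    ⟪gradP H ℓ, a⟫_ℝ = D (a, 0) := by
  have h1 := hasFDerivAt_partialP h
  have h2 : HasGradientAt (fun p => H (p, ℓ.2)) (gradP H ℓ) ℓ.1 :=
    h1.differentiableAt.hasGradientAt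
  have h3 := h2.hasFDerivAt.unique h1
  have h4 := DFunLike.congr_fun h3 a
  simpa [InnerProductSpace.toDual_apply_apply] using h4

lemma inner_gradX_eq {H : P n → ℝ} {D : P n →L[ℝ] ℝ} {ℓ : P n}
    (h : HasFDerivAt H D ℓ) (b : E n) :
    ⟪gradX H ℓ, b⟫_ℝ = D (0, b) := by
  have h1 := hasFDerivAt_partialX h
  have h2 : HasGradientAt (fun x => H (ℓ.1, x)) (gradX H ℓ) ℓ.2 :=
    h1.differentiableAt.hasGradientAt
  have h3 := h2.hasFDerivAt.unique h1
  have h4 := DFunLike.congr_fun h3 b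
  simpa [InnerProductSpace.toDual_apply_apply] using h4

lemma fderiv_apply_eq_inner {H : P n → ℝ} {D : P n →L[ℝ] ℝ} {ℓ : P n}
    (h : HasFDerivAt H D ℓ) (a b : E n) :
    D (a, b) = ⟪gradP H ℓ, a⟫_ℝ + ⟪gradX H ℓ, b⟫_ℝ := by
  rw [inner_gradP_eq h, inner_gradX_eq h, ← map_add]
  norm_num

end Aux

lemma hasFDerivAt_comp' {X Y Z : Type*} [NormedAddCommGroup X] [NormedSpace ℝ X]
    [NormedAddCommGroup Y] [NormedSpace ℝ Y] [NormedAddCommGroup Z] [NormedSpace ℝ Z]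
    (f : X → Y) (g : Y → Z) {f' : X →L[ℝ] Y} {g' : Y →L[ℝ] Z} {x : X}
    (hg : HasFDerivAt g g' (f x)) (hf : HasFDerivAt f f' x) :
    HasFDerivAt (fun x => g (f x)) (g'.comp f') x := hg.comp x hf

/-- **Lemma 4.1, item 4**: if `λ̂` solves `λ̂' = ⃗H₂(λ̂) + υ̂(t)⃗F₁(λ̂)` a.e. and
`H₂₃(λ̂(t)) = 0` on `[τ̂₂,T]`, then `λ̂` also solves the Cauchy problem for the
overmaximised Hamiltonian `H_t = H̃₂ + υ̂(t)F₁`. -/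
theorem reference_extremal_solves_overmaximised_hamiltonian {n : ℕ}
    (Ω Ω₀ : Set (P n)) (hΩ : IsOpen Ω) (hΩ₀ : IsOpen Ω₀) (hΩ₀Ω : Ω₀ ⊆ Ω)
    (H2 F1 : P n → ℝ) (hH2 : ContDiffOn ℝ (⊤ : ℕ∞) H2 Ω) (hF1 : ContDiffOn ℝ (⊤ : ℕ∞) F1 Ω)
    (hL : ∀ ℓ ∈ Ω, 0 < poisson F1 (poisson H2 F1) ℓ)
    (ε : ℝ) (hε : 0 < ε)
    (Φ : ℝ → P n → P n)
    (hΦsm : ContDiffOn ℝ (⊤ : ℕ∞) (fun q : ℝ × P n => Φ q.1 q.2) (Ioo (-ε) ε ×ˢ Ω₀))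
    (hΦ0 : ∀ ℓ ∈ Ω₀, Φ 0 ℓ = ℓ)
    (hΦin : ∀ ℓ ∈ Ω₀, ∀ s ∈ Ioo (-ε) ε, Φ s ℓ ∈ Ω)
    (hΦflow : ∀ ℓ ∈ Ω₀, ∀ s ∈ Ioo (-ε) ε,
      HasDerivAt (fun r => Φ r ℓ) (hamVF F1 (Φ s ℓ)) s)
    (θ : P n → ℝ) (hθsm : ContDiffOn ℝ (⊤ : ℕ∞) θ Ω₀)
    (hθrange : ∀ ℓ ∈ Ω₀, θ ℓ ∈ Ioo (-ε) ε)
    (hθ : ∀ ℓ ∈ Ω₀, poisson H2 F1 (Φ (θ ℓ) ℓ) = 0)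
    (hθ0 : ∀ ℓ ∈ Ω₀, poisson H2 F1 ℓ = 0 → θ ℓ = 0)
    (τ2 T : ℝ) (hτ2T : τ2 < T)
    (υ : ℝ → ℝ) (hυmeas : Measurable υ) (hυ01 : ∀ t ∈ Icc τ2 T, υ t ∈ Ioo (0:ℝ) 1)
    (lam : ℝ → P n) (hlamcont : ContinuousOn lam (Icc τ2 T))
    (hlamrange : ∀ t ∈ Icc τ2 T, lam t ∈ Ω₀)
    (hlamODE : ∀ᵐ t ∂(volume.restrict (Icc τ2 T)),
      HasDerivAt lam (hamVF H2 (lam t) + υ t • hamVF F1 (lam t)) t)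
    (hlamS : ∀ t ∈ Icc τ2 T, poisson H2 F1 (lam t) = 0) :
    ∀ᵐ t ∂(volume.restrict (Icc τ2 T)),
      HasDerivAt lam (hamVF (fun ℓ => H2 (Φ (θ ℓ) ℓ) + υ t * F1 ℓ) (lam t)) t := by
  have hIoo : IsOpen (Ioo (-ε) ε ×ˢ Ω₀) := isOpen_Ioo.prod hΩ₀
  filter_upwards [hlamODE, ae_restrict_mem measurableSet_Icc] with t hode ht
  set ℓ := lam t with hℓdef
  have hℓ0 : ℓ ∈ Ω₀ := hlamrange t ht
  have hℓΩ : ℓ ∈ Ω := hΩ₀Ω hℓ0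
  have hS : poisson H2 F1 ℓ = 0 := hlamS t ht
  have hθz : θ ℓ = 0 := hθ0 ℓ hℓ0 hS
  set c := υ t with hcdef
  suffices h : hamVF (fun ℓ' => H2 (Φ (θ ℓ') ℓ') + c * F1 ℓ') ℓ
      = hamVF H2 ℓ + c • hamVF F1 ℓ by
    rw [h]; exact hode
  -- basic differentiability
  have hH2d : HasFDerivAt H2 (fderiv ℝ H2 ℓ) ℓ :=
    ((hH2.contDiffAt (hΩ.mem_nhds hℓΩ)).differentiableAt (by simp)).hasFDerivAt
  have hF1d : HasFDerivAt F1 (fderiv ℝ F1 ℓ) ℓ :=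
    ((hF1.contDiffAt (hΩ.mem_nhds hℓΩ)).differentiableAt (by simp)).hasFDerivAt
  have hθd : HasFDerivAt θ (fderiv ℝ θ ℓ) ℓ :=
    ((hθsm.contDiffAt (hΩ₀.mem_nhds hℓ0)).differentiableAt (by simp)).hasFDerivAt
  have h0ℓ : ((0 : ℝ), ℓ) ∈ Ioo (-ε) ε ×ˢ Ω₀ := ⟨⟨by simpa using neg_lt_zero.mpr hε, by simpa using hε⟩, hℓ0⟩
  set A := fderiv ℝ (fun q : ℝ × P n => Φ q.1 q.2) (0, ℓ) with hAdef
  have hΦd : HasFDerivAt (fun q : ℝ × P n => Φ q.1 q.2) A (0, ℓ) :=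
    ((hΦsm.contDiffAt (hIoo.mem_nhds h0ℓ)).differentiableAt (by simp)).hasFDerivAt
  set dH2 := fderiv ℝ H2 ℓ with hdH2
  set dF1 := fderiv ℝ F1 ℓ with hdF1
  set dθ := fderiv ℝ θ ℓ with hdθ
  -- A (1, 0) = hamVF F1 ℓ
  have hA1 : A (1, 0) = hamVF F1 ℓ := by
    have hcurve : HasDerivAt (fun r : ℝ => (r, ℓ)) ((1 : ℝ), (0 : P n)) 0 :=
      (hasDerivAt_id 0).prodMk (hasDerivAt_const 0 ℓ)
    have h1 : HasDerivAt (fun r => Φ r ℓ) (A (1, 0)) 0 :=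
      by have := hΦd.comp_hasDerivAt 0 hcurve; exact this
    have h2 := hΦflow ℓ hℓ0 0 ⟨by linarith, hε⟩
    rw [hΦ0 ℓ hℓ0] at h2
    exact h1.unique h2
  -- A (0, v) = v
  have hA2 : ∀ v : P n, A (0, v) = v := by
    intro v
    have hins : HasFDerivAt (fun ℓ' : P n => ((0 : ℝ), ℓ'))
        (ContinuousLinearMap.inr ℝ ℝ (P n)) ℓ := hasFDerivAt_prodMk_right 0 ℓ
    have h1 : HasFDerivAt (fun ℓ' => Φ 0 ℓ')
        (A.comp (ContinuousLinearMap.inr ℝ ℝ (P n))) ℓ := hΦd.comp ℓ hins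
    have heq : (fun ℓ' => Φ 0 ℓ') =ᶠ[nhds ℓ] id := by
      filter_upwards [hΩ₀.mem_nhds hℓ0] with x hx
      exact hΦ0 x hx
    have h2 : HasFDerivAt id (A.comp (ContinuousLinearMap.inr ℝ ℝ (P n))) ℓ :=
      h1.congr_of_eventuallyEq heq.symm
    have h3 := h2.unique (hasFDerivAt_id ℓ)
    have := DFunLike.congr_fun h3 v
    simpa using this
  -- dH2 (hamVF F1 ℓ) = 0
  have hkill : dH2 (hamVF F1 ℓ) = 0 := by
    have : hamVF F1 ℓ = (-gradX F1 ℓ, gradP F1 ℓ) := rfl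
    rw [this, fderiv_apply_eq_inner hH2d, inner_neg_right]
    have : poisson H2 F1 ℓ = 0 := hS
    rw [poisson] at this
    have hsym1 : ⟪gradP H2 ℓ, gradX F1 ℓ⟫_ℝ - ⟪gradX H2 ℓ, gradP F1 ℓ⟫_ℝ = 0 := this
    linarith
  -- H̃₂ has fderiv dH2 at ℓ
  have hHt2 : HasFDerivAt (fun ℓ' => H2 (Φ (θ ℓ') ℓ')) dH2 ℓ := by
    have hpair : HasFDerivAt (fun ℓ' : P n => (θ ℓ', ℓ'))
        (dθ.prod (ContinuousLinearMap.id ℝ (P n))) ℓ := hθd.prodMk (hasFDerivAt_id ℓ)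
    have hΦd' : HasFDerivAt (fun q : ℝ × P n => Φ q.1 q.2) A (θ ℓ, ℓ) := by
      rw [hθz]; exact hΦd
    have hH2d' : HasFDerivAt H2 dH2 (Φ (θ ℓ) ℓ) := by
      rw [hθz, hΦ0 ℓ hℓ0]; exact hH2d
    have hcomp : HasFDerivAt (fun ℓ' => H2 (Φ (θ ℓ') ℓ'))
        ((dH2.comp A).comp (dθ.prod (ContinuousLinearMap.id ℝ (P n)))) ℓ := by
      have h5 : HasFDerivAt (fun q : ℝ × P n => H2 (Φ q.1 q.2)) (dH2.comp A) (θ ℓ, ℓ) := by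
        exact hH2d'.comp (θ ℓ, ℓ) hΦd'
      exact hasFDerivAt_comp' (fun ℓ' : P n => (θ ℓ', ℓ'))
        (fun q : ℝ × P n => H2 (Φ q.1 q.2)) h5 hpair
    have hDeq : (dH2.comp A).comp (dθ.prod (ContinuousLinearMap.id ℝ (P n))) = dH2 := by
      refine ContinuousLinearMap.ext fun v => ?_
      have hsplit : ((dθ v : ℝ), v) = dθ v • ((1 : ℝ), (0 : P n)) + (0, v) := by
        simp [Prod.ext_iff]
      simp only [ContinuousLinearMap.comp_apply, ContinuousLinearMap.prod_apply,
        ContinuousLinearMap.id_apply]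
      rw [hsplit, A.map_add, A.map_smul, hA1, hA2, dH2.map_add, dH2.map_smul, smul_eq_mul, hkill,
        mul_zero, zero_add]
    rwa [hDeq] at hcomp
  -- fderiv of the full Hamiltonian
  have hHtd : HasFDerivAt (fun ℓ' => H2 (Φ (θ ℓ') ℓ') + c * F1 ℓ') (dH2 + c • dF1) ℓ :=
    hHt2.add (hF1d.const_mul c)
  -- gradP of the full Hamiltonian
  have hgP : gradP (fun ℓ' => H2 (Φ (θ ℓ') ℓ') + c * F1 ℓ') ℓ
      = gradP H2 ℓ + c • gradP F1 ℓ := by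
    have h1 := hasFDerivAt_partialP hHtd
    have h2 : HasGradientAt (fun p => H2 (Φ (θ (p, ℓ.2)) (p, ℓ.2)) + c * F1 (p, ℓ.2))
        (gradP H2 ℓ + c • gradP F1 ℓ) ℓ.1 := by
      rw [hasGradientAt_iff_hasFDerivAt]
      refine h1.congr_fderiv ?_
      refine ContinuousLinearMap.ext fun a => ?_
      simp only [InnerProductSpace.toDual_apply_apply, ContinuousLinearMap.comp_apply,
        ContinuousLinearMap.inl_apply, ContinuousLinearMap.add_apply,
        ContinuousLinearMap.smul_apply, inner_add_left, real_inner_smul_left]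
      rw [inner_gradP_eq hH2d a, inner_gradP_eq hF1d a]
      simp
    exact h2.gradient
  -- gradX of the full Hamiltonian
  have hgX : gradX (fun ℓ' => H2 (Φ (θ ℓ') ℓ') + c * F1 ℓ') ℓ
      = gradX H2 ℓ + c • gradX F1 ℓ := by
    have h1 := hasFDerivAt_partialX hHtd
    have h2 : HasGradientAt (fun x => H2 (Φ (θ (ℓ.1, x)) (ℓ.1, x)) + c * F1 (ℓ.1, x))
        (gradX H2 ℓ + c • gradX F1 ℓ) ℓ.2 := by
      rw [hasGradientAt_iff_hasFDerivAt]
      refine h1.congr_fderiv ?_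
      refine ContinuousLinearMap.ext fun b => ?_
      simp only [InnerProductSpace.toDual_apply_apply, ContinuousLinearMap.comp_apply,
        ContinuousLinearMap.inr_apply, ContinuousLinearMap.add_apply,
        ContinuousLinearMap.smul_apply, inner_add_left, real_inner_smul_left]
      rw [inner_gradX_eq hH2d b, inner_gradX_eq hF1d b]
      simp
    exact h2.gradient
  show (-(gradX _ ℓ), gradP _ ℓ) = _
  rw [hgP, hgX]
  show _ = (-(gradX H2 ℓ), gradP H2 ℓ) + c • (-(gradX F1 ℓ), gradP F1 ℓ)
  simp [Prod.ext_iff, neg_add, smul_neg]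
  abel
end
end
end

section
/- With the data of the context, possibly after shrinking Ω₁, the following hold: (i) ⃗H_t is tangent to Σ := {ℓ∈Ω₀ : F₁(ℓ)=0}, i.e. {H̃₂,F₁}(ℓ)=0 (hence {H_t,F₁}(ℓ)=0) for every ℓ∈Σ and every t∈[τ̂₂,T] (Lemma 4.1, item 3); (ii) ⃗H₂ is invariant along the reference extremal: ⃗H₂(λ̂(t)) = D_ℓ𝓗_t(ℓ̂_f)[⃗H₂(ℓ̂_f)] for every t∈[τ̂₂,T] (Lemma 4.1, item 5); (iii) ⃗F₁ is invariant on Σ: for every ℓ∈Σ∩Ω₁ and t∈[τ̂₂,T], ⃗F₁(𝓗_t(ℓ)) = D_ℓ𝓗_t(ℓ)[⃗F₁(ℓ)] (Lemma 4.1, item 6). -/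
set_option maxHeartbeats 2000000


open MeasureTheory Set
open scoped InnerProductSpace

noncomputable section

noncomputable section

namespace Aux

variable {n : ℕ}

/-- raise an `E n` covector to a vector -/
def sharp {n : ℕ} (α : E n →L[ℝ] ℝ) : E n := (InnerProductSpace.toDual ℝ (E n)).symm α

lemma inner_sharp (α : E n →L[ℝ] ℝ) (v : E n) : ⟪sharp α, v⟫_ℝ = α v :=
  InnerProductSpace.toDual_symm_apply

lemma sharp_inner (α : E n →L[ℝ] ℝ) (v : E n) : ⟪v, sharp α⟫_ℝ = α v := by
  rw [real_inner_comm]; exact inner_sharp α v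

lemma sharp_add (α β : E n →L[ℝ] ℝ) : sharp (α + β) = sharp α + sharp β := by
  simp [sharp]

lemma sharp_smul (c : ℝ) (α : E n →L[ℝ] ℝ) : sharp (c • α) = c • sharp α := by
  simp [sharp]

/-- the `p`-inclusion -/
def inP {n : ℕ} : E n →L[ℝ] P n := ContinuousLinearMap.inl ℝ (E n) (E n)
/-- the `x`-inclusion -/
def inX {n : ℕ} : E n →L[ℝ] P n := ContinuousLinearMap.inr ℝ (E n) (E n)

/-- the linear map sending a covector on `P n` to the associated Hamiltonian vector. -/
def TT {n : ℕ} (B : P n →L[ℝ] ℝ) : P n := (-sharp (B.comp inX), sharp (B.comp inP))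

lemma TT_add (B C : P n →L[ℝ] ℝ) : TT (B + C) = TT B + TT C := by
  simp [TT, ContinuousLinearMap.add_comp, sharp_add, Prod.ext_iff]
  abel

lemma TT_smul (c : ℝ) (B : P n →L[ℝ] ℝ) : TT (c • B) = c • TT B := by
  simp [TT, ContinuousLinearMap.smul_comp, sharp_smul, Prod.ext_iff, smul_neg]

lemma hasGradP {H : P n → ℝ} {m : P n} (h : DifferentiableAt ℝ H m) :
    HasGradientAt (fun p => H (p, m.2)) (sharp ((fderiv ℝ H m).comp inP)) m.1 := by
  have h1 : HasFDerivAt (fun p : E n => (p, m.2)) (inP (n := n)) m.1 :=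
    (hasFDerivAt_id m.1).prodMk (hasFDerivAt_const m.2 m.1)
  exact (h.hasFDerivAt.comp m.1 h1).hasGradientAt

lemma hasGradX {H : P n → ℝ} {m : P n} (h : DifferentiableAt ℝ H m) :
    HasGradientAt (fun x => H (m.1, x)) (sharp ((fderiv ℝ H m).comp inX)) m.2 := by
  have h1 : HasFDerivAt (fun x : E n => (m.1, x)) (inX (n := n)) m.2 :=
    (hasFDerivAt_const m.1 m.2).prodMk (hasFDerivAt_id m.2)
  exact (h.hasFDerivAt.comp m.2 h1).hasGradientAt

lemma gradP_eq {H : P n → ℝ} {m : P n} (h : DifferentiableAt ℝ H m) :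
    gradP H m = sharp ((fderiv ℝ H m).comp inP) := (hasGradP h).gradient

lemma gradX_eq {H : P n → ℝ} {m : P n} (h : DifferentiableAt ℝ H m) :
    gradX H m = sharp ((fderiv ℝ H m).comp inX) := (hasGradX h).gradient

lemma hamVF_eq {H : P n → ℝ} {m : P n} (h : DifferentiableAt ℝ H m) :
    hamVF H m = TT (fderiv ℝ H m) := by
  simp [hamVF, TT, gradP_eq h, gradX_eq h]

/-- directional derivative along a Hamiltonian field is the Poisson bracket. -/
lemma fderiv_hamVF {F G : P n → ℝ} {m : P n} (hF : DifferentiableAt ℝ F m)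
    (hG : DifferentiableAt ℝ G m) :
    fderiv ℝ G m (hamVF F m) = poisson F G m := by
  have e1 : ∀ (v : P n), fderiv ℝ G m v = ⟪gradP G m, v.1⟫_ℝ + ⟪gradX G m, v.2⟫_ℝ := by
    intro v
    have : (v.1, v.2) = inP v.1 + inX v.2 := by
      simp [inP, inX]
    rw [gradP_eq hG, gradX_eq hG, inner_sharp, inner_sharp]
    calc fderiv ℝ G m v = fderiv ℝ G m (inP v.1 + inX v.2) := by rw [← this]
    _ = _ := by rw [map_add]; rfl
  rw [e1]
  simp only [hamVF, poisson]
  rw [inner_neg_right, real_inner_comm (gradP G m), real_inner_comm (gradX G m)]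
  ring

end Aux

namespace Aux2
open Aux
variable {n : ℕ} {F G ψ : P n → ℝ} {m : P n} {c : ℝ}

lemma poisson_antisymm (F G : P n → ℝ) (m : P n) : poisson F G m = - poisson G F m := by
  simp only [poisson, real_inner_comm (gradP F m), real_inner_comm (gradX F m)]
  ring

lemma poisson_self (F : P n → ℝ) (m : P n) : poisson F F m = 0 := by
  simp only [poisson, real_inner_comm (gradP F m)]
  ring

lemma hamVF_add_smul (h1 : DifferentiableAt ℝ F m) (h2 : DifferentiableAt ℝ ψ m) (c : ℝ) :
    hamVF (fun x => F x + c * ψ x) m = hamVF F m + c • hamVF ψ m := by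
  have hd : fderiv ℝ (fun x => F x + c * ψ x) m = fderiv ℝ F m + c • fderiv ℝ ψ m := by
    rw [fderiv_fun_add h1 (h2.const_mul c), fderiv_const_mul h2]
  rw [hamVF_eq (H := fun x => F x + c * ψ x) (h1.add (h2.const_mul c)), hd, TT_add, TT_smul, hamVF_eq h1, hamVF_eq h2]

lemma poisson_add_smul_left (h1 : DifferentiableAt ℝ F m) (h2 : DifferentiableAt ℝ ψ m)
    (hG : DifferentiableAt ℝ G m) (c : ℝ) :
    poisson (fun x => F x + c * ψ x) G m = poisson F G m + c * poisson ψ G m := by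
  rw [← fderiv_hamVF (F := fun x => F x + c * ψ x) (h1.add (h2.const_mul c)) hG, hamVF_add_smul h1 h2 c, map_add,
    ContinuousLinearMap.map_smul, fderiv_hamVF h1 hG, fderiv_hamVF h2 hG, smul_eq_mul]

end Aux2

namespace Aux3
open Aux Aux2
variable {n : ℕ} {F G φ : P n → ℝ} {m : P n} {U : Set (P n)}

/-- `TT` as a linear map. -/
def TTlin (n : ℕ) : (P n →L[ℝ] ℝ) →ₗ[ℝ] P n where
  toFun := TT
  map_add' := TT_add
  map_smul' := TT_smul

/-- `TT` as a continuous linear map. -/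
def TTclm (n : ℕ) : (P n →L[ℝ] ℝ) →L[ℝ] P n := LinearMap.toContinuousLinearMap (TTlin n)

lemma TTclm_apply (B : P n →L[ℝ] ℝ) : TTclm n B = TT B := rfl

lemma contDiffOn_hamVF (hU : IsOpen U) {k : ℕ} (hφ : ContDiffOn ℝ (k + 1 : ℕ) φ U) :
    ContDiffOn ℝ k (hamVF φ) U := by
  have h1 : ContDiffOn ℝ k (fun m => TTclm n (fderiv ℝ φ m)) U :=
    (TTclm n).contDiff.comp_contDiffOn (hφ.fderiv_of_isOpen hU (by norm_cast))
  exact h1.congr fun m hm =>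
    (hamVF_eq (((hφ.differentiableOn (by norm_cast)).differentiableAt
      (hU.mem_nhds hm)))).trans (TTclm_apply _).symm

lemma differentiableAt_of_contDiffOn {X : Type*} [NormedAddCommGroup X] [NormedSpace ℝ X]
    {f : P n → X} (hU : IsOpen U) {k : ℕ}
    (hφ : ContDiffOn ℝ (k + 1 : ℕ) f U) (hm : m ∈ U) : DifferentiableAt ℝ f m :=
  (hφ.differentiableOn (by norm_cast)).differentiableAt (hU.mem_nhds hm)

lemma fderiv_apply_decomp (hG : DifferentiableAt ℝ G m) (v : P n) :
    fderiv ℝ G m v = ⟪gradP G m, v.1⟫_ℝ + ⟪gradX G m, v.2⟫_ℝ := by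
  have : (v.1, v.2) = inP v.1 + inX v.2 := by simp [inP, inX]
  rw [gradP_eq hG, gradX_eq hG, inner_sharp, inner_sharp]
  calc fderiv ℝ G m v = fderiv ℝ G m (inP v.1 + inX v.2) := by rw [← this]
  _ = _ := by rw [map_add]; rfl

lemma fderiv_TT (hG : DifferentiableAt ℝ G m) (B : P n →L[ℝ] ℝ) :
    fderiv ℝ G m (TT B) = - B (hamVF G m) := by
  rw [fderiv_apply_decomp hG]
  simp only [TT, hamVF]
  rw [inner_neg_right, sharp_inner, sharp_inner]
  have e0 : ((-gradX G m, gradP G m) : P n) = inX (gradP G m) - inP (gradX G m) := by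
    simp [inP, inX, Prod.ext_iff]
  have e1 : (B.comp inX) (gradP G m) = B (inX (gradP G m)) := rfl
  have e2 : (B.comp inP) (gradX G m) = B (inP (gradX G m)) := rfl
  rw [e0, map_sub, e1, e2]
  ring

/-- The key commutation lemma: if `{F,G} = 0` on an open set, the Hamiltonian vector
fields commute in the sense of the Lie bracket. -/
lemma lie_commute (hU : IsOpen U) (hF : ContDiffOn ℝ 2 F U) (hG : ContDiffOn ℝ 2 G U)
    (h0 : ∀ m' ∈ U, poisson F G m' = 0) (hm : m ∈ U) :
    fderiv ℝ (hamVF G) m (hamVF F m) = fderiv ℝ (hamVF F) m (hamVF G m) := by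
  have hF1 : ContDiffOn ℝ (1 + 1 : ℕ) F U := by norm_num; exact hF
  have hG1 : ContDiffOn ℝ (1 + 1 : ℕ) G U := by norm_num; exact hG
  have hdF : ∀ m' ∈ U, DifferentiableAt ℝ F m' := fun m' hm' =>
    differentiableAt_of_contDiffOn hU (k := 1) hF1 hm'
  have hdG : ∀ m' ∈ U, DifferentiableAt ℝ G m' := fun m' hm' =>
    differentiableAt_of_contDiffOn hU (k := 1) hG1 hm'
  -- second derivatives
  set BF := fderiv ℝ (fderiv ℝ F) m with hBF
  set BG := fderiv ℝ (fderiv ℝ G) m with hBG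
  have hAF : ContDiffOn ℝ (0 + 1 : ℕ) (fderiv ℝ F) U := by
    norm_num
    exact hF.fderiv_of_isOpen hU (by norm_num)
  have hAG : ContDiffOn ℝ (0 + 1 : ℕ) (fderiv ℝ G) U := by
    norm_num
    exact hG.fderiv_of_isOpen hU (by norm_num)
  have hdAF : DifferentiableAt ℝ (fderiv ℝ F) m :=
    differentiableAt_of_contDiffOn hU (k := 0) hAF hm
  have hdAG : DifferentiableAt ℝ (fderiv ℝ G) m :=
    differentiableAt_of_contDiffOn hU (k := 0) hAG hm
  have hev : ∀ (H : P n → ℝ), (∀ m' ∈ U, DifferentiableAt ℝ H m') →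
      hamVF H =ᶠ[nhds m] fun m' => TTclm n (fderiv ℝ H m') := by
    intro H hd
    filter_upwards [hU.mem_nhds hm] with m' hm'
    exact (hamVF_eq (hd m' hm')).trans (TTclm_apply _).symm
  have hVF : HasFDerivAt (hamVF F) ((TTclm n).comp BF) m :=
    ((TTclm n).hasFDerivAt.comp m hdAF.hasFDerivAt).congr_of_eventuallyEq (hev F hdF)
  have hVG : HasFDerivAt (hamVF G) ((TTclm n).comp BG) m :=
    ((TTclm n).hasFDerivAt.comp m hdAG.hasFDerivAt).congr_of_eventuallyEq (hev G hdG)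
  have hzero : fderiv ℝ (fun m' => fderiv ℝ G m' (hamVF F m')) m = 0 := by
    have hee : (fun m' => fderiv ℝ G m' (hamVF F m')) =ᶠ[nhds m] (fun _ => (0:ℝ)) := by
      filter_upwards [hU.mem_nhds hm] with m' hm'
      rw [fderiv_hamVF (hdF m' hm') (hdG m' hm'), h0 m' hm']
    rw [hee.fderiv_eq]
    exact fderiv_const_apply 0
  have hprod := (hdAG.hasFDerivAt.clm_apply hVF).fderiv
  rw [hzero] at hprod
  have key : ∀ w, BG w (hamVF F m) = (BF w) (hamVF G m) := by
    intro w
    have h1 : ((fderiv ℝ G m).comp ((TTclm n).comp BF) + BG.flip (hamVF F m)) w = 0 := by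
      rw [hprod.symm]; rfl
    simp only [ContinuousLinearMap.add_apply, ContinuousLinearMap.comp_apply,
      ContinuousLinearMap.flip_apply] at h1
    have h2 : fderiv ℝ G m (TTclm n (BF w)) = - (BF w) (hamVF G m) := by
      rw [TTclm_apply]; exact fderiv_TT (hdG m hm) (BF w)
    rw [h2] at h1
    linarith
  have hsF : IsSymmSndFDerivAt ℝ F m :=
    (hF.contDiffAt (hU.mem_nhds hm)).isSymmSndFDerivAt (by simp [minSmoothness_of_isRCLikeNormedField])
  have hsG : IsSymmSndFDerivAt ℝ G m :=
    (hG.contDiffAt (hU.mem_nhds hm)).isSymmSndFDerivAt (by simp [minSmoothness_of_isRCLikeNormedField])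
  rw [hVF.fderiv, hVG.fderiv]
  simp only [ContinuousLinearMap.comp_apply]
  refine congrArg _ (ContinuousLinearMap.ext fun w => ?_)
  calc BG (hamVF F m) w = BG w (hamVF F m) := hsG _ _
  _ = (BF w) (hamVF G m) := key w
  _ = BF (hamVF G m) w := hsF _ _

end Aux3

namespace Aux4
open Aux Aux2 Aux3 intervalIntegral

variable {n : ℕ}

/-- clamp to `[a,b]` -/
def clamp (a b u : ℝ) : ℝ := min (max u a) b

lemma clamp_mem {a b : ℝ} (h : a ≤ b) (u : ℝ) : clamp a b u ∈ Icc a b :=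
  ⟨le_min (le_max_right u a) h, min_le_right _ _⟩

lemma clamp_eq {a b u : ℝ} (h : u ∈ Icc a b) : clamp a b u = u := by
  simp only [clamp, max_eq_left h.1, min_eq_left h.2]

lemma continuous_clamp (a b : ℝ) : Continuous (clamp a b) :=
  (continuous_id.max continuous_const).min continuous_const

/-- If a function is invariant (infinitesimally) under the nonautonomous flow `𝓗`,
then its vector field is transported by the differential of the flow. -/
lemma var_inv {Ω₀ Ω₁ : Set (P n)} (hΩ₀ : IsOpen Ω₀) (hΩ₁ : IsOpen Ω₁)
    (hΩ₁Ω₀ : Ω₁ ⊆ Ω₀) {τ2 T : ℝ} (hτ2T : τ2 < T)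
    {𝓗 : ℝ → P n → P n} {W : ℝ → P n → P n} {V : P n → P n}
    (hflowC1 : ContDiffOn ℝ 1 (fun q : ℝ × P n => 𝓗 q.1 q.2) (Icc τ2 T ×ˢ Ω₁))
    (hflowT : ∀ ℓ ∈ Ω₁, 𝓗 T ℓ = ℓ)
    (hflowin : ∀ ℓ ∈ Ω₁, ∀ t ∈ Icc τ2 T, 𝓗 t ℓ ∈ Ω₀)
    (hODE : ∀ ℓ ∈ Ω₁, ∀ t ∈ Icc τ2 T, HasDerivAt (fun s => 𝓗 s ℓ) (W t (𝓗 t ℓ)) t)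
    (hWcont : ContinuousOn (fun q : ℝ × P n => W q.1 q.2) (Icc τ2 T ×ˢ Ω₀))
    (hWdiff : ∀ t ∈ Icc τ2 T, ∀ m ∈ Ω₀, DifferentiableAt ℝ (W t) m)
    (hWfd : ContinuousOn (fun q : ℝ × P n => fderiv ℝ (W q.1) q.2) (Icc τ2 T ×ˢ Ω₀))
    (hVdiff : ∀ m ∈ Ω₀, DifferentiableAt ℝ V m)
    (hVcont : ContinuousOn V Ω₀)
    (hcomm : ∀ t ∈ Icc τ2 T, ∀ m ∈ Ω₀, fderiv ℝ V m (W t m) = fderiv ℝ (W t) m (V m))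
    {ℓ : P n} (hℓ : ℓ ∈ Ω₁) :
    ∀ t ∈ Icc τ2 T, V (𝓗 t ℓ) = fderiv ℝ (𝓗 t) ℓ (V ℓ) := by
  have hSud : UniqueDiffOn ℝ (Icc τ2 T ×ˢ Ω₁) :=
    (uniqueDiffOn_Icc hτ2T).prod hΩ₁.uniqueDiffOn
  set Hj : ℝ × P n → P n := fun q => 𝓗 q.1 q.2 with hHj
  set M : ℝ × P n → (ℝ × P n →L[ℝ] P n) :=
    fun q => fderivWithin ℝ Hj (Icc τ2 T ×ˢ Ω₁) q with hM
  have hMcont : ContinuousOn M (Icc τ2 T ×ˢ Ω₁) :=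
    hflowC1.continuousOn_fderivWithin hSud le_rfl
  -- the slice derivative
  have hslice : ∀ t ∈ Icc τ2 T, ∀ m ∈ Ω₁,
      HasFDerivAt (𝓗 t) ((M (t, m)).comp (ContinuousLinearMap.inr ℝ ℝ (P n))) m := by
    intro t ht m hm
    have h1 : HasFDerivWithinAt Hj (M (t, m)) (Icc τ2 T ×ˢ Ω₁) (t, m) :=
      ((hflowC1.differentiableOn one_ne_zero) (t, m) ⟨ht, hm⟩).hasFDerivWithinAt
    have h2 : HasFDerivAt (fun m' : P n => ((t, m') : ℝ × P n))
        (ContinuousLinearMap.inr ℝ ℝ (P n)) m :=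
      (hasFDerivAt_const t m).prodMk (hasFDerivAt_id m)
    have h3 : HasFDerivWithinAt (fun m' => Hj (t, m'))
        ((M (t, m)).comp (ContinuousLinearMap.inr ℝ ℝ (P n))) Ω₁ m :=
      h1.comp m h2.hasFDerivWithinAt (fun m' hm' => ⟨ht, hm'⟩)
    exact h3.hasFDerivAt (hΩ₁.mem_nhds hm)
  have hsliceD : ∀ t ∈ Icc τ2 T, ∀ m ∈ Ω₁,
      fderiv ℝ (𝓗 t) m = (M (t, m)).comp (ContinuousLinearMap.inr ℝ ℝ (P n)) :=
    fun t ht m hm => (hslice t ht m hm).fderiv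
  set v0 := V ℓ with hv0
  set γ : ℝ → P n := fun t => 𝓗 t ℓ with hγ
  have hγcont : ContinuousOn γ (Icc τ2 T) :=
    fun t ht => ((hODE ℓ hℓ t ht).continuousAt).continuousWithinAt
  have hγin : ∀ t ∈ Icc τ2 T, γ t ∈ Ω₀ := fun t ht => hflowin ℓ hℓ t ht
  set g : ℝ → P n := fun t => fderiv ℝ (𝓗 t) ℓ v0 with hg
  have hgf : ∀ t ∈ Icc τ2 T, g t = M (t, ℓ) (0, v0) := by
    intro t ht
    rw [hg]; simp only [hsliceD t ht ℓ hℓ]; rfl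
  have hgcont : ContinuousOn g (Icc τ2 T) := by
    have h1 : ContinuousOn (fun t => M (t, ℓ) (0, v0)) (Icc τ2 T) := by
      have h2 : ContinuousOn (fun t : ℝ => ((t, ℓ) : ℝ × P n)) (Icc τ2 T) :=
        (continuous_id.prodMk continuous_const).continuousOn
      exact (hMcont.comp h2 (fun t ht => ⟨ht, hℓ⟩)).clm_apply continuousOn_const
    exact h1.congr hgf
  set y : ℝ → P n := fun t => V (γ t) with hy
  have hycont : ContinuousOn y (Icc τ2 T) :=
    hVcont.comp hγcont hγin
  set A : ℝ → (P n →L[ℝ] P n) := fun s => fderiv ℝ (W s) (γ s) with hA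
  have hAcont : ContinuousOn A (Icc τ2 T) := by
    have h2 : ContinuousOn (fun s : ℝ => ((s, γ s) : ℝ × P n)) (Icc τ2 T) :=
      (continuousOn_id.prodMk hγcont)
    exact hWfd.comp h2 (fun s hs => ⟨hs, hγin s hs⟩)

  -- FTC representation of the flow
  have hFTC : ∀ ℓ' ∈ Ω₁, ∀ t ∈ Icc τ2 T,
      𝓗 t ℓ' = ℓ' - ∫ s in t..T, W s (𝓗 s ℓ') := by
    intro ℓ' hℓ' t ht
    have hsub : uIcc t T ⊆ Icc τ2 T := by
      rw [uIcc_of_le ht.2]; exact Icc_subset_Icc ht.1 le_rfl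
    have hccurve : ContinuousOn (fun s => 𝓗 s ℓ') (Icc τ2 T) :=
      fun s hs => ((hODE ℓ' hℓ' s hs).continuousAt).continuousWithinAt
    have hcont : ContinuousOn (fun s => W s (𝓗 s ℓ')) (uIcc t T) := by
      have h2 : ContinuousOn (fun s : ℝ => ((s, 𝓗 s ℓ') : ℝ × P n)) (uIcc t T) :=
        continuousOn_id.prodMk (hccurve.mono hsub)
      exact hWcont.comp h2 (fun s hs => ⟨hsub hs, hflowin ℓ' hℓ' s (hsub hs)⟩)
    have hint := intervalIntegral.integral_eq_sub_of_hasDerivAt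
      (fun s hs => hODE ℓ' hℓ' s (hsub hs)) hcont.intervalIntegrable
    rw [hflowT ℓ' hℓ'] at hint
    rw [hint]; abel
  -- geometric setup around ℓ
  obtain ⟨ρ', hρ'pos, hball⟩ : ∃ r > 0, Metric.closedBall ℓ r ⊆ Ω₁ := by
    rcases Metric.isOpen_iff.1 hΩ₁ ℓ hℓ with ⟨r, hr, h⟩
    exact ⟨r/2, by linarith, (Metric.closedBall_subset_ball (by linarith)).trans h⟩
  set ρ : ℝ := ρ' / (‖v0‖ + 1) with hρdef
  have hρpos : 0 < ρ := div_pos hρ'pos (by positivity)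
  set c : ℝ → P n := fun σ => ℓ + σ • v0 with hcdef
  have hc0 : c 0 = ℓ := by simp [hcdef]
  have hcmem : ∀ σ ∈ Metric.ball (0:ℝ) ρ, c σ ∈ Metric.closedBall ℓ ρ' := by
    intro σ hσ
    rw [Metric.mem_closedBall, dist_eq_norm, hcdef]
    simp only [add_sub_cancel_left]
    rw [norm_smul]
    have hσ' : ‖σ‖ ≤ ρ := le_of_lt (by simpa [Real.norm_eq_abs, Metric.mem_ball,
      Real.dist_eq] using hσ)
    calc ‖σ‖ * ‖v0‖ ≤ ρ * ‖v0‖ := mul_le_mul_of_nonneg_right hσ' (norm_nonneg _)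
      _ ≤ ρ' := by
          rw [hρdef, div_mul_eq_mul_div, div_le_iff₀ (by positivity)]
          nlinarith [norm_nonneg v0, hρ'pos]
  have hcball : ∀ σ ∈ Metric.ball (0:ℝ) ρ, c σ ∈ Ω₁ := fun σ hσ => hball (hcmem σ hσ)
  have hcderiv : ∀ σ : ℝ, HasDerivAt c v0 σ := by
    intro σ
    simpa [hcdef] using ((hasDerivAt_id σ).smul_const v0).const_add ℓ
  have hKbcomp : IsCompact (Metric.closedBall ℓ ρ') := isCompact_closedBall ℓ ρ'
  set K2 : Set (P n) := Hj '' (Icc τ2 T ×ˢ Metric.closedBall ℓ ρ') with hK2def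
  have hK2sub₁ : (Icc τ2 T ×ˢ Metric.closedBall ℓ ρ') ⊆ Icc τ2 T ×ˢ Ω₁ :=
    prod_mono_right hball
  have hK2comp : IsCompact K2 :=
    (isCompact_Icc.prod hKbcomp).image_of_continuousOn (hflowC1.continuousOn.mono hK2sub₁)
  have hK2Ω₀ : K2 ⊆ Ω₀ := by
    rintro _ ⟨⟨s, m⟩, ⟨hs, hmm⟩, rfl⟩
    exact hflowin m (hball hmm) s hs
  obtain ⟨C1, hC1⟩ := (isCompact_Icc.prod hKbcomp).exists_bound_of_continuousOn
    (hMcont.mono hK2sub₁)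
  obtain ⟨C2, hC2⟩ := (isCompact_Icc.prod hK2comp).exists_bound_of_continuousOn
    (hWfd.mono (prod_mono_right hK2Ω₀))
  -- the integral identity for g
  have key1 : ∀ t ∈ Icc τ2 T, g t = v0 - ∫ s in t..T, A s (g s) := by
    intro t ht
    have hsub : uIcc t T ⊆ Icc τ2 T := by
      rw [uIcc_of_le ht.2]; exact Icc_subset_Icc ht.1 le_rfl
    have hsub' : Set.uIoc t T ⊆ Icc τ2 T := Set.uIoc_subset_uIcc.trans hsub
    set Fi : ℝ → ℝ → P n := fun σ s => W s (𝓗 s (c σ)) with hFidef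
    set Fi' : ℝ → ℝ → P n := fun σ s =>
      fderiv ℝ (W s) (𝓗 s (c σ)) ((M (s, c σ)) (0, v0)) with hFi'def
    have hFicont : ∀ σ ∈ Metric.ball (0:ℝ) ρ, ContinuousOn (Fi σ) (Icc τ2 T) := by
      intro σ hσ
      have hccurve : ContinuousOn (fun s => 𝓗 s (c σ)) (Icc τ2 T) :=
        fun s hs => ((hODE (c σ) (hcball σ hσ) s hs).continuousAt).continuousWithinAt
      have h2 : ContinuousOn (fun s : ℝ => ((s, 𝓗 s (c σ)) : ℝ × P n)) (Icc τ2 T) :=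
        continuousOn_id.prodMk hccurve
      exact hWcont.comp h2 (fun s hs => ⟨hs, hflowin (c σ) (hcball σ hσ) s hs⟩)
    have hF_meas : ∀ᶠ σ in nhds (0:ℝ),
        AEStronglyMeasurable (Fi σ) (MeasureTheory.volume.restrict (Set.uIoc t T)) := by
      filter_upwards [Metric.ball_mem_nhds (0:ℝ) hρpos] with σ hσ
      exact ((hFicont σ hσ).mono hsub').aestronglyMeasurable measurableSet_uIoc
    have hF_int : IntervalIntegrable (Fi 0) MeasureTheory.volume t T :=
      ((hFicont 0 (Metric.mem_ball_self hρpos)).mono hsub).intervalIntegrable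
    have hgMc : ContinuousOn (fun s => (M (s, ℓ)) (0, v0)) (Icc τ2 T) := by
      have h2 : ContinuousOn (fun s : ℝ => ((s, ℓ) : ℝ × P n)) (Icc τ2 T) :=
        (continuous_id.prodMk continuous_const).continuousOn
      exact (hMcont.comp h2 (fun s hs => ⟨hs, hℓ⟩)).clm_apply continuousOn_const
    have hF'0 : ∀ s ∈ Icc τ2 T, Fi' 0 s = A s ((M (s, ℓ)) (0, v0)) := by
      intro s hs
      rw [hFi'def, hA]
      simp [hc0, hγ]
    have hF'_meas : AEStronglyMeasurable (Fi' 0)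
        (MeasureTheory.volume.restrict (Set.uIoc t T)) := by
      have hcont : ContinuousOn (Fi' 0) (Icc τ2 T) :=
        ((hAcont.clm_apply hgMc).congr (fun s hs => hF'0 s hs)).mono (le_refl _)
      exact (hcont.mono hsub').aestronglyMeasurable measurableSet_uIoc
    have hnv : ‖(((0 : ℝ), v0) : ℝ × P n)‖ = ‖v0‖ := by
      simp [Prod.norm_def]
    have h_bound : ∀ᵐ s ∂(MeasureTheory.volume), s ∈ Set.uIoc t T →
        ∀ σ ∈ Metric.ball (0:ℝ) ρ, ‖Fi' σ s‖ ≤ C2 * (C1 * ‖v0‖) := by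
      apply MeasureTheory.ae_of_all
      intro s hs σ hσ
      have hsI : s ∈ Icc τ2 T := hsub' hs
      have hpt : 𝓗 s (c σ) ∈ K2 := ⟨(s, c σ), ⟨hsI, hcmem σ hσ⟩, rfl⟩
      have h1 : ‖fderiv ℝ (W s) (𝓗 s (c σ))‖ ≤ C2 := hC2 (s, 𝓗 s (c σ)) ⟨hsI, hpt⟩
      have h2 : ‖(M (s, c σ)) (0, v0)‖ ≤ C1 * ‖v0‖ := by
        calc ‖(M (s, c σ)) (0, v0)‖ ≤ ‖M (s, c σ)‖ * ‖(((0 : ℝ), v0) : ℝ × P n)‖ :=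
              (M (s, c σ)).le_opNorm _
        _ ≤ C1 * ‖v0‖ := by
              rw [hnv]
              exact mul_le_mul_of_nonneg_right (hC1 (s, c σ) ⟨hsI, hcmem σ hσ⟩) (norm_nonneg _)
      calc ‖Fi' σ s‖ ≤ ‖fderiv ℝ (W s) (𝓗 s (c σ))‖ * ‖(M (s, c σ)) (0, v0)‖ :=
            (fderiv ℝ (W s) (𝓗 s (c σ))).le_opNorm _
      _ ≤ C2 * (C1 * ‖v0‖) := by
            apply mul_le_mul h1 h2 (norm_nonneg _)
            exact le_trans (norm_nonneg _) h1
    have h_diff : ∀ᵐ s ∂(MeasureTheory.volume), s ∈ Set.uIoc t T →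
        ∀ σ ∈ Metric.ball (0:ℝ) ρ, HasDerivAt (fun σ' => Fi σ' s) (Fi' σ s) σ := by
      apply MeasureTheory.ae_of_all
      intro s hs σ hσ
      have hsI : s ∈ Icc τ2 T := hsub' hs
      have h1 : HasDerivAt (fun σ' => 𝓗 s (c σ')) ((M (s, c σ)) (0, v0)) σ := by
        have h2 := (hslice s hsI (c σ) (hcball σ hσ)).comp_hasDerivAt σ (hcderiv σ)
        simpa [Function.comp_def] using h2
      exact (hWdiff s hsI _ (hflowin _ (hcball σ hσ) s hsI)).hasFDerivAt.comp_hasDerivAt σ h1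
    have main := (intervalIntegral.hasDerivAt_integral_of_dominated_loc_of_deriv_le (Metric.ball_mem_nhds 0 hρpos)
      hF_meas hF_int hF'_meas h_bound (intervalIntegrable_const) h_diff).2
    -- identify the two derivatives
    have hL : HasDerivAt (fun σ => 𝓗 t (c σ)) (g t) 0 := by
      have h2 := (hslice t ht (c 0) (by rw [hc0]; exact hℓ)).comp_hasDerivAt 0 (hcderiv 0)
      rw [hgf t ht]
      simpa [hc0, Function.comp_def] using h2
    have hRL : HasDerivAt (fun σ => c σ - ∫ s in t..T, Fi σ s)
        (v0 - ∫ s in t..T, Fi' 0 s) 0 := (hcderiv 0).sub main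
    have hEq : (fun σ => c σ - ∫ s in t..T, Fi σ s) =ᶠ[nhds (0:ℝ)]
        (fun σ => 𝓗 t (c σ)) := by
      filter_upwards [Metric.ball_mem_nhds (0:ℝ) hρpos] with σ hσ
      exact (hFTC (c σ) (hcball σ hσ) t ht).symm
    have hL' : HasDerivAt (fun σ => c σ - ∫ s in t..T, Fi σ s) (g t) 0 :=
      hL.congr_of_eventuallyEq hEq
    have huniq : g t = v0 - ∫ s in t..T, Fi' 0 s := hL'.unique hRL
    rw [huniq]
    congr 1
    apply intervalIntegral.integral_congr
    intro s hs
    rw [hF'0 s (hsub hs), ← hgf s (hsub hs)]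
  -- the integral identity for y
  have key2 : ∀ t ∈ Icc τ2 T, y t = v0 - ∫ s in t..T, A s (y s) := by
    intro t ht
    have hsub : uIcc t T ⊆ Icc τ2 T := by
      rw [uIcc_of_le ht.2]; exact Icc_subset_Icc ht.1 le_rfl
    have hyderiv : ∀ s ∈ uIcc t T, HasDerivAt y (A s (y s)) s := by
      intro s hs
      have h1 := (hVdiff (γ s) (hγin s (hsub hs))).hasFDerivAt.comp_hasDerivAt s
        (hODE ℓ hℓ s (hsub hs))
      rw [hcomm s (hsub hs) (γ s) (hγin s (hsub hs))] at h1
      exact h1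
    have hyint : ContinuousOn (fun s => A s (y s)) (uIcc t T) :=
      (hAcont.mono hsub).clm_apply (hycont.mono hsub)
    have hint := intervalIntegral.integral_eq_sub_of_hasDerivAt hyderiv
      hyint.intervalIntegrable
    have hyT : y T = v0 := by
      rw [hy]; simp only [hγ, hflowT ℓ hℓ, hv0]
    rw [hyT] at hint
    rw [hint]; abel
  -- Gronwall
  obtain ⟨C, hC⟩ := isCompact_Icc.exists_bound_of_continuousOn hAcont
  set δf : ℝ → P n := fun t => g t - y t with hδfdef
  have hδcont : ContinuousOn δf (Icc τ2 T) := hgcont.sub hycont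
  have hclc : Continuous (clamp τ2 T) := continuous_clamp τ2 T
  set h : ℝ → P n := fun u => A (clamp τ2 T u) (δf (clamp τ2 T u)) with hhdef
  have hhcont : Continuous h := by
    have h1 : Continuous (fun u => A (clamp τ2 T u)) :=
      hAcont.comp_continuous hclc (fun u => clamp_mem hτ2T.le u)
    have h2 : Continuous (fun u => δf (clamp τ2 T u)) :=
      hδcont.comp_continuous hclc (fun u => clamp_mem hτ2T.le u)
    exact h1.clm_apply h2
  set Θ : ℝ → P n := fun u => ∫ s in T..u, h s with hΘdef
  have hΘeq : ∀ t ∈ Icc τ2 T, Θ t = δf t := by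
    intro t ht
    have hsub : uIcc t T ⊆ Icc τ2 T := by
      rw [uIcc_of_le ht.2]; exact Icc_subset_Icc ht.1 le_rfl
    have hint1 : IntervalIntegrable (fun s => A s (g s)) MeasureTheory.volume t T :=
      ((hAcont.mono hsub).clm_apply (hgcont.mono hsub)).intervalIntegrable
    have hint2 : IntervalIntegrable (fun s => A s (y s)) MeasureTheory.volume t T :=
      ((hAcont.mono hsub).clm_apply (hycont.mono hsub)).intervalIntegrable
    have h1 : δf t = -∫ s in t..T, (A s (g s) - A s (y s)) := by
      rw [hδfdef]
      simp only [key1 t ht, key2 t ht, intervalIntegral.integral_sub hint1 hint2]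
      abel
    have h2 : ∫ s in t..T, (A s (g s) - A s (y s)) = ∫ s in t..T, h s := by
      apply intervalIntegral.integral_congr
      intro s hs
      rw [hhdef]
      simp only [clamp_eq (hsub hs), hδfdef, map_sub]
    rw [h1, h2]
    show (∫ s in T..t, h s) = -∫ s in t..T, h s
    exact intervalIntegral.integral_symm t T
  have hΘderiv : ∀ u, HasDerivAt Θ (h u) u := fun u =>
    intervalIntegral.integral_hasDerivAt_right (hhcont.intervalIntegrable T u)
      (hhcont.stronglyMeasurableAtFilter _ _) hhcont.continuousAt
  set e : ℝ → P n := fun u => Θ (τ2 + T - u) with hedef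
  have hederiv : ∀ u, HasDerivAt e (-h (τ2 + T - u)) u := by
    intro u
    have h1 : HasDerivAt (fun u : ℝ => τ2 + T - u) (-1) u :=
      (hasDerivAt_id u).const_sub (τ2 + T)
    have h2 := (hΘderiv (τ2 + T - u)).scomp u h1
    simpa [Function.comp_def, hedef] using h2
  have hbound : ∀ u ∈ Ico τ2 T, ‖-h (τ2 + T - u)‖ ≤ C * ‖e u‖ + 0 := by
    intro u hu
    have hw : τ2 + T - u ∈ Icc τ2 T := ⟨by linarith [hu.2], by linarith [hu.1]⟩
    rw [norm_neg, hhdef]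
    simp only [clamp_eq hw]
    have hle : ‖A (τ2 + T - u) (δf (τ2 + T - u))‖ ≤ C * ‖δf (τ2 + T - u)‖ :=
      le_trans ((A (τ2 + T - u)).le_opNorm _)
        (mul_le_mul_of_nonneg_right (hC _ hw) (norm_nonneg _))
    have hee : e u = δf (τ2 + T - u) := by rw [hedef]; exact hΘeq _ hw
    rw [hee]; linarith
  have hea : ‖e τ2‖ ≤ 0 := by
    have : e τ2 = Θ T := by rw [hedef]; norm_num
    rw [this, hΘdef]
    simp
  have hgron := norm_le_gronwallBound_of_norm_deriv_right_le
    (f := e) (f' := fun u => -h (τ2 + T - u)) (δ := 0) (K := C) (ε := 0) (a := τ2) (b := T)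
    ((continuous_iff_continuousAt.2 fun u => (hederiv u).continuousAt).continuousOn)
    (fun u _ => (hederiv u).hasDerivWithinAt) hea hbound
  intro t ht
  have hu : τ2 + T - t ∈ Icc τ2 T := ⟨by linarith [ht.2], by linarith [ht.1]⟩
  have h0 := hgron (τ2 + T - t) hu
  rw [gronwallBound_ε0_δ0] at h0
  have he2 : e (τ2 + T - t) = δf t := by
    show Θ (τ2 + T - (τ2 + T - t)) = δf t
    have h3 : τ2 + T - (τ2 + T - t) = t := by ring
    rw [h3]; exact hΘeq t ht
  rw [he2] at h0
  have h4 : δf t = 0 := norm_le_zero_iff.1 h0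
  have h5 : g t = y t := by rwa [hδfdef, sub_eq_zero] at h4
  exact h5.symm

end Aux4

namespace Aux5
open Aux Aux2 Aux3

variable {n : ℕ}

lemma contDiff_hamVF {k : ℕ} {φ : P n → ℝ} (hφ : ContDiff ℝ (k + 1 : ℕ) φ) :
    ContDiff ℝ k (hamVF φ) := by
  have h1 : ContDiff ℝ k (fun m => TTclm n (fderiv ℝ φ m)) :=
    (TTclm n).contDiff.comp (hφ.fderiv_right (by norm_cast))
  have h2 : hamVF φ = fun m => TTclm n (fderiv ℝ φ m) := funext fun m =>
    (hamVF_eq ((hφ.differentiable (by norm_cast)).differentiableAt))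
  rw [h2]; exact h1

lemma contDiff_poisson {k : ℕ} {F G : P n → ℝ} (hF : ContDiff ℝ (k + 1 : ℕ) F)
    (hG : ContDiff ℝ (k + 1 : ℕ) G) : ContDiff ℝ k (poisson F G) := by
  have h1 : ContDiff ℝ k (fun m => fderiv ℝ G m (hamVF F m)) :=
    (hG.fderiv_right (by norm_cast)).clm_apply (contDiff_hamVF hF)
  have h2 : poisson F G = fun m => fderiv ℝ G m (hamVF F m) := funext fun m =>
    (fderiv_hamVF ((hF.differentiable (by norm_cast)).differentiableAt)
      ((hG.differentiable (by norm_cast)).differentiableAt)).symm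
  rw [h2]; exact h1

/-- a `C¹` vector field is Lipschitz on closed balls. -/
lemma lipschitz_on_closedBall {v : P n → P n} (hv : ContDiff ℝ 1 v) (x : P n) (R : ℝ) :
    ∃ K : NNReal, LipschitzOnWith K v (Metric.closedBall x R) := by
  obtain ⟨C, hC⟩ := (isCompact_closedBall x R).exists_bound_of_continuousOn
    ((hv.continuous_fderiv one_ne_zero).continuousOn)
  refine ⟨C.toNNReal, ?_⟩
  apply (convex_closedBall x R).lipschitzOnWith_of_nnnorm_hasFDerivWithin_le
    (f' := fun y => fderiv ℝ v y)
    (fun y hy => (hv.differentiable one_ne_zero y).hasFDerivAt.hasFDerivWithinAt)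
  intro y hy
  have h1 : ‖fderiv ℝ v y‖ ≤ C := hC y hy
  have h2 : (‖fderiv ℝ v y‖₊ : ℝ) ≤ (C.toNNReal : ℝ) := by
    rw [coe_nnnorm, Real.coe_toNNReal']
    exact le_max_of_le_left h1
  exact_mod_cast h2

/-- two-sided uniqueness for an autonomous ODE with a `C¹` field. -/
lemma ode_unique {v : P n → P n} (hv : ContDiff ℝ 1 v) {c d t₀ : ℝ}
    (ht₀ : t₀ ∈ Icc c d) {f g : ℝ → P n}
    (hf : ∀ t ∈ Icc c d, HasDerivAt f (v (f t)) t)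
    (hg : ∀ t ∈ Icc c d, HasDerivAt g (v (g t)) t)
    (h0 : f t₀ = g t₀) : ∀ t ∈ Icc c d, f t = g t := by
  have hcf : ContinuousOn f (Icc c d) := fun t ht => (hf t ht).continuousAt.continuousWithinAt
  have hcg : ContinuousOn g (Icc c d) := fun t ht => (hg t ht).continuousAt.continuousWithinAt
  -- a common closed ball containing both images
  obtain ⟨Rf, hRf⟩ := (isCompact_Icc.image_of_continuousOn hcf).isBounded.subset_closedBall 0
  obtain ⟨Rg, hRg⟩ := (isCompact_Icc.image_of_continuousOn hcg).isBounded.subset_closedBall 0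
  set R := max Rf Rg with hR
  have hfR : ∀ t ∈ Icc c d, f t ∈ Metric.closedBall 0 R := fun t ht =>
    Metric.closedBall_subset_closedBall (le_max_left _ _) (hRf ⟨t, ht, rfl⟩)
  have hgR : ∀ t ∈ Icc c d, g t ∈ Metric.closedBall 0 R := fun t ht =>
    Metric.closedBall_subset_closedBall (le_max_right _ _) (hRg ⟨t, ht, rfl⟩)
  obtain ⟨K, hK⟩ := lipschitz_on_closedBall hv 0 R
  have hKt : ∀ t : ℝ, LipschitzOnWith K (fun y => v y) (Metric.closedBall (0 : P n) R) :=
    fun _ => hK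
  intro t ht
  rcases le_or_gt t₀ t with hle | hlt
  · have hIcc : Icc t₀ t ⊆ Icc c d := Icc_subset_Icc ht₀.1 ht.2
    have := ODE_solution_unique_of_mem_Icc_right (v := fun _ y => v y)
      (s := fun _ => Metric.closedBall 0 R) (fun t _ => hKt t)
      (hcf.mono hIcc) (fun u hu => (hf u (hIcc (Ico_subset_Icc_self hu))).hasDerivWithinAt)
      (fun u hu => hfR u (hIcc (Ico_subset_Icc_self hu)))
      (hcg.mono hIcc) (fun u hu => (hg u (hIcc (Ico_subset_Icc_self hu))).hasDerivWithinAt)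
      (fun u hu => hgR u (hIcc (Ico_subset_Icc_self hu))) h0
    exact this ⟨hle, le_refl t⟩
  · have hIcc : Icc t t₀ ⊆ Icc c d := Icc_subset_Icc ht.1 ht₀.2
    have := ODE_solution_unique_of_mem_Icc_left (v := fun _ y => v y)
      (s := fun _ => Metric.closedBall 0 R) (fun t _ => hKt t)
      (hcf.mono hIcc) (fun u hu => (hf u (hIcc (Ioc_subset_Icc_self hu))).hasDerivWithinAt)
      (fun u hu => hfR u (hIcc (Ioc_subset_Icc_self hu)))
      (hcg.mono hIcc) (fun u hu => (hg u (hIcc (Ioc_subset_Icc_self hu))).hasDerivWithinAt)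
      (fun u hu => hgR u (hIcc (Ioc_subset_Icc_self hu))) h0
    exact this ⟨le_refl t, hlt.le⟩

end Aux5

open Aux Aux2 Aux3 Aux4 Aux5

/-- **Lemma 4.1, items 3, 5 and 6**: possibly after shrinking `Ω₁`, the overmaximised
Hamiltonian vector field is tangent to `Σ = {F₁ = 0}`, `⃗H₂` is invariant along the
reference extremal, and `⃗F₁` is invariant on `Σ` under the overmaximised flow `𝓗`. -/
theorem overmaximised_flow_invariances {n : ℕ}
    (h2 h3 : E n → E n) (hh2 : ContDiff ℝ (⊤ : ℕ∞) h2) (hh3 : ContDiff ℝ (⊤ : ℕ∞) h3)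
    (H2 H3 F1 : P n → ℝ)
    (hH2def : H2 = fun ℓ : P n => ⟪ℓ.1, h2 ℓ.2⟫_ℝ)
    (hH3def : H3 = fun ℓ : P n => ⟪ℓ.1, h3 ℓ.2⟫_ℝ)
    (hF1def : F1 = fun ℓ : P n => H3 ℓ - H2 ℓ)
    (Ω Ω₀ Ω₁ : Set (P n)) (hΩ : IsOpen Ω) (hΩ₀ : IsOpen Ω₀) (hΩ₁ : IsOpen Ω₁)
    (hΩ₀Ω : Ω₀ ⊆ Ω) (hΩ₁Ω₀ : Ω₁ ⊆ Ω₀)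
    (hL : ∀ ℓ ∈ Ω, 0 < poisson F1 (poisson H2 F1) ℓ)
    (ε : ℝ) (hε : 0 < ε)
    (Φ : ℝ → P n → P n)
    (hΦsm : ContDiffOn ℝ (⊤ : ℕ∞) (fun q : ℝ × P n => Φ q.1 q.2) (Ioo (-ε) ε ×ˢ Ω₀))
    (hΦ0 : ∀ ℓ ∈ Ω₀, Φ 0 ℓ = ℓ)
    (hΦin : ∀ ℓ ∈ Ω₀, ∀ s ∈ Ioo (-ε) ε, Φ s ℓ ∈ Ω)
    (hΦflow : ∀ ℓ ∈ Ω₀, ∀ s ∈ Ioo (-ε) ε,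
      HasDerivAt (fun r => Φ r ℓ) (hamVF F1 (Φ s ℓ)) s)
    (θ : P n → ℝ) (hθsm : ContDiffOn ℝ (⊤ : ℕ∞) θ Ω₀)
    (hθrange : ∀ ℓ ∈ Ω₀, θ ℓ ∈ Ioo (-ε) ε)
    (hθ : ∀ ℓ ∈ Ω₀, poisson H2 F1 (Φ (θ ℓ) ℓ) = 0)
    (hθ0 : ∀ ℓ ∈ Ω₀, poisson H2 F1 ℓ = 0 → θ ℓ = 0)
    (τ2 T : ℝ) (hτ2T : τ2 < T)
    (υ : ℝ → ℝ) (hυsm : ContDiffOn ℝ (⊤ : ℕ∞) υ (Icc τ2 T))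
    (hυ01 : ∀ t ∈ Icc τ2 T, υ t ∈ Ioo (0:ℝ) 1)
    -- the overmaximised flow 𝓗 of H_t = H̃₂ + υ̂(t)F₁, of class C¹, from time T
    (𝓗 : ℝ → P n → P n)
    (hflowC1 : ContDiffOn ℝ 1 (fun q : ℝ × P n => 𝓗 q.1 q.2) (Icc τ2 T ×ˢ Ω₁))
    (hflowT : ∀ ℓ ∈ Ω₁, 𝓗 T ℓ = ℓ)
    (hflowin : ∀ ℓ ∈ Ω₁, ∀ t ∈ Icc τ2 T, 𝓗 t ℓ ∈ Ω₀)
    (hflowODE : ∀ ℓ ∈ Ω₁, ∀ t ∈ Icc τ2 T,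
      HasDerivAt (fun s => 𝓗 s ℓ)
        (hamVF (fun ℓ' => H2 (Φ (θ ℓ') ℓ') + υ t * F1 ℓ') (𝓗 t ℓ)) t)
    -- the reference extremal λ̂(t) = 𝓗_t(ℓ̂_f) lies in 𝒮 = {F₁ = 0, H₂₃ = 0}
    (ℓf : P n) (hℓf : ℓf ∈ Ω₁)
    (hrefF1 : ∀ t ∈ Icc τ2 T, F1 (𝓗 t ℓf) = 0)
    (hrefH23 : ∀ t ∈ Icc τ2 T, poisson H2 F1 (𝓗 t ℓf) = 0) :
    ∃ Ω₁' : Set (P n), IsOpen Ω₁' ∧ ℓf ∈ Ω₁' ∧ Ω₁' ⊆ Ω₁ ∧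
      -- (i) ⃗H̃₂ and hence ⃗H_t are tangent to Σ = {ℓ ∈ Ω₀ : F₁(ℓ) = 0}
      (∀ ℓ ∈ Ω₀, F1 ℓ = 0 →
        poisson (fun ℓ' => H2 (Φ (θ ℓ') ℓ')) F1 ℓ = 0 ∧
        ∀ t ∈ Icc τ2 T,
          poisson (fun ℓ' => H2 (Φ (θ ℓ') ℓ') + υ t * F1 ℓ') F1 ℓ = 0) ∧
      -- (ii) invariance of ⃗H₂ along the reference extremal
      (∀ t ∈ Icc τ2 T,
        hamVF H2 (𝓗 t ℓf) = fderiv ℝ (𝓗 t) ℓf (hamVF H2 ℓf)) ∧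
      -- (iii) invariance of ⃗F₁ on Σ
      (∀ ℓ ∈ Ω₁', F1 ℓ = 0 → ∀ t ∈ Icc τ2 T,
        hamVF F1 (𝓗 t ℓ) = fderiv ℝ (𝓗 t) ℓ (hamVF F1 ℓ)) := by
  -- ## Smoothness of the data
  have hkH2 : ∀ k : ℕ, ContDiff ℝ k H2 := fun k => by
    rw [hH2def]
    exact ContDiff.inner (𝕜 := ℝ) contDiff_fst ((hh2.of_le (by exact_mod_cast le_top)).comp contDiff_snd)
  have hkH3 : ∀ k : ℕ, ContDiff ℝ k H3 := fun k => by
    rw [hH3def]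
    exact ContDiff.inner (𝕜 := ℝ) contDiff_fst ((hh3.of_le (by exact_mod_cast le_top)).comp contDiff_snd)
  have hkF1 : ∀ k : ℕ, ContDiff ℝ k F1 := fun k => by
    rw [hF1def]; exact (hkH3 k).sub (hkH2 k)
  have hF1diff : ∀ m : P n, DifferentiableAt ℝ F1 m := fun m =>
    ((hkF1 1).differentiable (by norm_cast)).differentiableAt
  have hH2diff : ∀ m : P n, DifferentiableAt ℝ H2 m := fun m =>
    ((hkH2 1).differentiable (by norm_cast)).differentiableAt
  have hθk : ∀ k : ℕ, ContDiffOn ℝ k θ Ω₀ := fun k => hθsm.of_le (by exact_mod_cast le_top)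
  have hΦj : ∀ k : ℕ, ContDiffOn ℝ k (fun q : ℝ × P n => Φ q.1 q.2)
      (Ioo (-ε) ε ×ˢ Ω₀) := fun k => hΦsm.of_le (by exact_mod_cast le_top)
  have hHt2k : ∀ k : ℕ, ContDiffOn ℝ k (fun ℓ' => H2 (Φ (θ ℓ') ℓ')) Ω₀ := by
    intro k
    have hpair : ContDiffOn ℝ k (fun ℓ' : P n => ((θ ℓ', ℓ') : ℝ × P n)) Ω₀ :=
      (hθk k).prodMk contDiffOn_id
    have hmaps : MapsTo (fun ℓ' : P n => ((θ ℓ', ℓ') : ℝ × P n)) Ω₀ (Ioo (-ε) ε ×ˢ Ω₀) :=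
      fun ℓ' hℓ' => ⟨hθrange ℓ' hℓ', hℓ'⟩
    exact (hkH2 k).comp_contDiffOn ((hΦj k).comp hpair hmaps)
  have hHt2diff : ∀ m ∈ Ω₀, DifferentiableAt ℝ (fun ℓ' => H2 (Φ (θ ℓ') ℓ')) m :=
    fun m hm => differentiableAt_of_contDiffOn hΩ₀ (k := 0) (hHt2k 1) hm
  have hH23k : ∀ k : ℕ, ContDiff ℝ k (poisson H2 F1) := fun k =>
    contDiff_poisson (hkH2 (k + 1)) (hkF1 (k + 1))
  have hH23diff : ∀ m : P n, DifferentiableAt ℝ (poisson H2 F1) m := fun m =>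
    ((hH23k 1).differentiable (by norm_cast)).differentiableAt
  -- ## (i) : {H̃₂, F₁} = 0 on all of Ω₀
  have hamF1cd' : ∀ k : ℕ, ContDiff ℝ k (hamVF F1) := fun k =>
    contDiff_hamVF (hkF1 (k + 1))
  have hpois1 : ∀ ℓ ∈ Ω₀, poisson (fun ℓ' => H2 (Φ (θ ℓ') ℓ')) F1 ℓ = 0 := by
    intro ℓ hℓ
    have h0Ioo : (0:ℝ) ∈ Ioo (-ε) ε := ⟨neg_lt_zero.2 hε, hε⟩
    have hΦcont0 : ContinuousAt (fun s => Φ s ℓ) 0 := (hΦflow ℓ hℓ 0 h0Ioo).continuousAt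
    have hev1 : ∀ᶠ s in nhds (0:ℝ), Φ s ℓ ∈ Ω₀ := by
      have h1 : Ω₀ ∈ nhds ((fun s => Φ s ℓ) 0) := by
        rw [show (fun s => Φ s ℓ) 0 = ℓ from hΦ0 ℓ hℓ]
        exact hΩ₀.mem_nhds hℓ
      exact hΦcont0.eventually_mem h1
    have hθcont : ContinuousAt θ ((fun s => Φ s ℓ) 0) := by
      rw [show (fun s => Φ s ℓ) 0 = ℓ from hΦ0 ℓ hℓ]
      exact (hθk 0).continuousOn.continuousAt (hΩ₀.mem_nhds hℓ)
    have hev2 : ∀ᶠ s in nhds (0:ℝ), θ (Φ s ℓ) + s ∈ Ioo (-ε) ε := by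
      have hc : ContinuousAt (fun s => θ (Φ s ℓ) + s) 0 :=
        (ContinuousAt.comp (f := fun s => Φ s ℓ) hθcont hΦcont0).add continuousAt_id
      have hval : (fun s => θ (Φ s ℓ) + s) 0 ∈ Ioo (-ε) ε := by
        simp only [add_zero, hΦ0 ℓ hℓ]
        exact hθrange ℓ hℓ
      exact hc.eventually_mem (isOpen_Ioo.mem_nhds hval)
    have hev3 : ∀ᶠ s in nhds (0:ℝ), s ∈ Ioo (-ε) ε :=
      isOpen_Ioo.mem_nhds h0Ioo
    have hmonoD : ∀ a ∈ Ioo (-ε) ε, HasDerivAt (fun a => poisson H2 F1 (Φ a ℓ))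
        (poisson F1 (poisson H2 F1) (Φ a ℓ)) a := by
      intro a ha
      have h1 := (hH23diff (Φ a ℓ)).hasFDerivAt.comp_hasDerivAt a (hΦflow ℓ hℓ a ha)
      rwa [fderiv_hamVF (hF1diff _) (hH23diff _)] at h1
    have hmono : StrictMonoOn (fun a => poisson H2 F1 (Φ a ℓ)) (Ioo (-ε) ε) := by
      apply strictMonoOn_of_deriv_pos (convex_Ioo _ _)
      · intro a ha
        exact (hmonoD a ha).continuousAt.continuousWithinAt
      · intro a ha
        rw [interior_Ioo] at ha
        rw [(hmonoD a ha).deriv]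
        exact hL (Φ a ℓ) (hΦin ℓ hℓ a ha)
    have hGL : ∀ᶠ s in nhds (0:ℝ), ∀ a ∈ Ioo (-ε) ε, a + s ∈ Ioo (-ε) ε →
        Φ a (Φ s ℓ) = Φ (a + s) ℓ := by
      filter_upwards [hev1, hev3] with s hsΩ hsI
      intro a ha has
      have hvf : ContDiff ℝ 1 (hamVF F1) := by exact_mod_cast hamF1cd' 1
      have hf : ∀ u ∈ Icc (min a 0) (max a 0), HasDerivAt (fun u => Φ (u + s) ℓ)
          (hamVF F1 (Φ (u + s) ℓ)) u := by
        intro u hu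
        have hu2 : u + s ∈ Ioo (-ε) ε := by
          constructor
          · rcases le_total a 0 with h | h
            · rw [min_eq_left h] at hu; linarith [hu.1, has.1]
            · rw [min_eq_right h] at hu; linarith [hu.1, hsI.1]
          · rcases le_total a 0 with h | h
            · rw [max_eq_right h] at hu; linarith [hu.2, hsI.2]
            · rw [max_eq_left h] at hu; linarith [hu.2, has.2]
        have h3 := hΦflow ℓ hℓ (u + s) hu2
        have h4 : HasDerivAt (fun u : ℝ => u + s) 1 u := (hasDerivAt_id u).add_const s
        have h5 := h3.scomp u h4
        simpa [Function.comp_def] using h5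
      have hg : ∀ u ∈ Icc (min a 0) (max a 0), HasDerivAt (fun u => Φ u (Φ s ℓ))
          (hamVF F1 (Φ u (Φ s ℓ))) u := by
        intro u hu
        have hu1 : u ∈ Ioo (-ε) ε :=
          ⟨lt_of_lt_of_le (lt_min ha.1 h0Ioo.1) hu.1,
            lt_of_le_of_lt hu.2 (max_lt ha.2 h0Ioo.2)⟩
        exact hΦflow (Φ s ℓ) hsΩ u hu1
      have h0mem : (0:ℝ) ∈ Icc (min a 0) (max a 0) := ⟨min_le_right a 0, le_max_right a 0⟩
      have hinit : Φ (0 + s) ℓ = Φ 0 (Φ s ℓ) := by rw [zero_add, hΦ0 _ hsΩ]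
      have hres := ode_unique hvf h0mem hf hg hinit a ⟨min_le_left a 0, le_max_left a 0⟩
      exact hres.symm
    have hshift : ∀ᶠ s in nhds (0:ℝ), θ (Φ s ℓ) + s = θ ℓ := by
      filter_upwards [hev1, hev2, hGL] with s hsΩ hs2 hgl
      have hb1 : θ (Φ s ℓ) ∈ Ioo (-ε) ε := hθrange _ hsΩ
      have h1 : poisson H2 F1 (Φ (θ (Φ s ℓ) + s) ℓ) = 0 := by
        rw [← hgl (θ (Φ s ℓ)) hb1 hs2]
        exact hθ (Φ s ℓ) hsΩ
      have h2 : poisson H2 F1 (Φ (θ ℓ) ℓ) = 0 := hθ ℓ hℓ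
      exact hmono.injOn hs2 (hθrange ℓ hℓ) (h1.trans h2.symm)
    have hconst : ∀ᶠ s in nhds (0:ℝ),
        H2 (Φ (θ (Φ s ℓ)) (Φ s ℓ)) = H2 (Φ (θ ℓ) ℓ) := by
      filter_upwards [hev1, hev2, hGL, hshift] with s hsΩ hs2 hgl hsh
      rw [hgl (θ (Φ s ℓ)) (hθrange _ hsΩ) hs2, hsh]
    have hd1 : HasDerivAt (fun s => H2 (Φ (θ (Φ s ℓ)) (Φ s ℓ))) 0 0 :=
      (hasDerivAt_const (0:ℝ) (H2 (Φ (θ ℓ) ℓ))).congr_of_eventuallyEq hconst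
    have hΦd0 : HasDerivAt (fun s => Φ s ℓ) (hamVF F1 ℓ) 0 := by
      have h1 := hΦflow ℓ hℓ 0 h0Ioo
      rwa [hΦ0 ℓ hℓ] at h1
    have hd2 : HasDerivAt (fun s => H2 (Φ (θ (Φ s ℓ)) (Φ s ℓ)))
        (fderiv ℝ (fun ℓ' => H2 (Φ (θ ℓ') ℓ')) ℓ (hamVF F1 ℓ)) 0 := by
      have h1 : HasFDerivAt (fun ℓ' => H2 (Φ (θ ℓ') ℓ'))
          (fderiv ℝ (fun ℓ' => H2 (Φ (θ ℓ') ℓ')) ℓ) ((fun s => Φ s ℓ) 0) := by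
        rw [show (fun s => Φ s ℓ) 0 = ℓ from hΦ0 ℓ hℓ]
        exact (hHt2diff ℓ hℓ).hasFDerivAt
      exact h1.comp_hasDerivAt (f := fun s => Φ s ℓ) 0 hΦd0
    have h5 : fderiv ℝ (fun ℓ' => H2 (Φ (θ ℓ') ℓ')) ℓ (hamVF F1 ℓ) = 0 := hd2.unique hd1
    rw [fderiv_hamVF (hF1diff ℓ) (hHt2diff ℓ hℓ)] at h5
    rw [poisson_antisymm, h5]
    ring
  have hpois2 : ∀ t ∈ Icc τ2 T, ∀ ℓ ∈ Ω₀,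
      poisson (fun ℓ' => H2 (Φ (θ ℓ') ℓ') + υ t * F1 ℓ') F1 ℓ = 0 := by
    intro t ht ℓ hℓ
    rw [poisson_add_smul_left (hHt2diff ℓ hℓ) (hF1diff ℓ) (hF1diff ℓ) (υ t),
      hpois1 ℓ hℓ, poisson_self]
    ring
  -- ## commutation relations for the Lie brackets
  have hHtotcd : ∀ t : ℝ, ContDiffOn ℝ 2
      (fun ℓ' => H2 (Φ (θ ℓ') ℓ') + υ t * F1 ℓ') Ω₀ := by
    intro t
    exact ((hHt2k 2).add ((contDiff_const.mul (hkF1 2)).contDiffOn))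
  have hF1cdOn : ContDiffOn ℝ 2 F1 Ω₀ := (hkF1 2).contDiffOn
  have hHt2cdOn : ContDiffOn ℝ 2 (fun ℓ' => H2 (Φ (θ ℓ') ℓ')) Ω₀ := hHt2k 2
  have hcommF1 : ∀ t ∈ Icc τ2 T, ∀ m ∈ Ω₀,
      fderiv ℝ (hamVF F1) m (hamVF (fun ℓ' => H2 (Φ (θ ℓ') ℓ') + υ t * F1 ℓ') m) =
      fderiv ℝ (hamVF (fun ℓ' => H2 (Φ (θ ℓ') ℓ') + υ t * F1 ℓ')) m (hamVF F1 m) :=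
    fun t ht m hm => lie_commute hΩ₀ (hHtotcd t) hF1cdOn (hpois2 t ht) hm
  have hcommHt2 : ∀ t ∈ Icc τ2 T, ∀ m ∈ Ω₀,
      fderiv ℝ (hamVF (fun ℓ' => H2 (Φ (θ ℓ') ℓ')) ) m
        (hamVF (fun ℓ' => H2 (Φ (θ ℓ') ℓ') + υ t * F1 ℓ') m) =
      fderiv ℝ (hamVF (fun ℓ' => H2 (Φ (θ ℓ') ℓ') + υ t * F1 ℓ')) m
        (hamVF (fun ℓ' => H2 (Φ (θ ℓ') ℓ')) m) := by
    intro t ht m hm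
    apply lie_commute hΩ₀ (hHtotcd t) hHt2cdOn _ hm
    intro m' hm'
    rw [poisson_add_smul_left (hHt2diff m' hm') (hF1diff m') (hHt2diff m' hm') (υ t),
      poisson_self, poisson_antisymm, hpois1 m' hm']
    ring
  -- ## hypotheses of the variational-invariance lemma
  have hWrep : ∀ t : ℝ, ∀ m ∈ Ω₀,
      hamVF (fun ℓ' => H2 (Φ (θ ℓ') ℓ') + υ t * F1 ℓ') m =
      hamVF (fun ℓ' => H2 (Φ (θ ℓ') ℓ')) m + υ t • hamVF F1 m :=
    fun t m hm => hamVF_add_smul (hHt2diff m hm) (hF1diff m) (υ t)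
  have hamHt2cd : ContDiffOn ℝ 2 (hamVF (fun ℓ' => H2 (Φ (θ ℓ') ℓ'))) Ω₀ :=
    contDiffOn_hamVF hΩ₀ (k := 2) (hHt2k 3)
  have hamF1cd : ∀ k : ℕ, ContDiff ℝ k (hamVF F1) := fun k =>
    contDiff_hamVF (hkF1 (k + 1))
  have hυcont : ContinuousOn υ (Icc τ2 T) := hυsm.continuousOn
  have hWcont : ContinuousOn (fun q : ℝ × P n =>
      hamVF (fun ℓ' => H2 (Φ (θ ℓ') ℓ') + υ q.1 * F1 ℓ') q.2) (Icc τ2 T ×ˢ Ω₀) := by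
    have h1 : ContinuousOn (fun q : ℝ × P n =>
        hamVF (fun ℓ' => H2 (Φ (θ ℓ') ℓ')) q.2 + υ q.1 • hamVF F1 q.2)
        (Icc τ2 T ×ˢ Ω₀) := by
      apply ContinuousOn.add
      · exact hamHt2cd.continuousOn.comp continuousOn_snd (fun q hq => hq.2)
      · exact (hυcont.comp continuousOn_fst (fun q hq => hq.1)).smul
          ((hamF1cd 0).continuous.comp_continuousOn continuousOn_snd)
    exact h1.congr (fun q hq => hWrep q.1 q.2 hq.2)
  have hWdiffAt : ∀ t ∈ Icc τ2 T, ∀ m ∈ Ω₀,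
      DifferentiableAt ℝ (hamVF (fun ℓ' => H2 (Φ (θ ℓ') ℓ') + υ t * F1 ℓ')) m := by
    intro t ht m hm
    have h1 : DifferentiableAt ℝ (fun m' =>
        hamVF (fun ℓ' => H2 (Φ (θ ℓ') ℓ')) m' + υ t • hamVF F1 m') m := by
      apply DifferentiableAt.add
      · exact differentiableAt_of_contDiffOn hΩ₀ (k := 1) hamHt2cd hm
      · exact (((hamF1cd 1).differentiable (by norm_cast)).differentiableAt).const_smul (υ t)
    apply h1.congr_of_eventuallyEq
    filter_upwards [hΩ₀.mem_nhds hm] with m' hm'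
    exact hWrep t m' hm'
  have hWfdrep : ∀ t : ℝ, ∀ m ∈ Ω₀,
      fderiv ℝ (hamVF (fun ℓ' => H2 (Φ (θ ℓ') ℓ') + υ t * F1 ℓ')) m =
      fderiv ℝ (hamVF (fun ℓ' => H2 (Φ (θ ℓ') ℓ'))) m + υ t • fderiv ℝ (hamVF F1) m := by
    intro t m hm
    have hee : (hamVF (fun ℓ' => H2 (Φ (θ ℓ') ℓ') + υ t * F1 ℓ')) =ᶠ[nhds m]
        (fun m' => hamVF (fun ℓ' => H2 (Φ (θ ℓ') ℓ')) m' + υ t • hamVF F1 m') := by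
      filter_upwards [hΩ₀.mem_nhds hm] with m' hm'
      exact hWrep t m' hm'
    rw [hee.fderiv_eq]
    rw [fderiv_fun_add (g := fun m' => υ t • hamVF F1 m') (differentiableAt_of_contDiffOn hΩ₀ (k := 1) hamHt2cd hm)
      ((((hamF1cd 1).differentiable (by norm_cast)).differentiableAt).const_smul (υ t)),
      fderiv_fun_const_smul (((hamF1cd 1).differentiable (by norm_cast)).differentiableAt)]
  have hWfd : ContinuousOn (fun q : ℝ × P n =>
      fderiv ℝ (hamVF (fun ℓ' => H2 (Φ (θ ℓ') ℓ') + υ q.1 * F1 ℓ')) q.2)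
      (Icc τ2 T ×ˢ Ω₀) := by
    have h1 : ContinuousOn (fun q : ℝ × P n =>
        fderiv ℝ (hamVF (fun ℓ' => H2 (Φ (θ ℓ') ℓ'))) q.2 +
          υ q.1 • fderiv ℝ (hamVF F1) q.2) (Icc τ2 T ×ˢ Ω₀) := by
      apply ContinuousOn.add
      · exact (hamHt2cd.continuousOn_fderiv_of_isOpen hΩ₀ (by norm_num)).comp
          continuousOn_snd (fun q hq => hq.2)
      · exact (hυcont.comp continuousOn_fst (fun q hq => hq.1)).smul
          (((hamF1cd 2).continuous_fderiv (by norm_cast)).comp_continuousOn continuousOn_snd)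
    exact h1.congr (fun q hq => hWfdrep q.1 q.2 hq.2)
  -- ## step 1 for (ii): the overmaximised field agrees with ⃗H₂ on {H₂₃ = 0}
  have hham_eq : ∀ m ∈ Ω₀, poisson H2 F1 m = 0 →
      hamVF (fun ℓ' => H2 (Φ (θ ℓ') ℓ')) m = hamVF H2 m := by
    intro m hm hH23m
    have hθ0m : θ m = 0 := hθ0 m hm hH23m
    have hopen : IsOpen (Ioo (-ε) ε ×ˢ Ω₀) := isOpen_Ioo.prod hΩ₀
    have hmem : ((0 : ℝ), m) ∈ Ioo (-ε) ε ×ˢ Ω₀ := ⟨⟨neg_lt_zero.2 hε, hε⟩, hm⟩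
    have hΦdiff : DifferentiableAt ℝ (fun q : ℝ × P n => Φ q.1 q.2) (0, m) :=
      ((hΦj 1).differentiableOn (by norm_cast)).differentiableAt (hopen.mem_nhds hmem)
    set L := fderiv ℝ (fun q : ℝ × P n => Φ q.1 q.2) (0, m) with hLdef
    have hpart1 : L (1, 0) = hamVF F1 m := by
      have h2 : HasDerivAt (fun s : ℝ => ((s, m) : ℝ × P n)) (1, (0 : P n)) 0 :=
        (hasDerivAt_id 0).prodMk (hasDerivAt_const 0 m)
      have h1 : HasDerivAt (fun s => Φ s m) (L (1, 0)) 0 :=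
        hΦdiff.hasFDerivAt.comp_hasDerivAt (f := fun s : ℝ => ((s, m) : ℝ × P n)) 0 h2
      have h3 := hΦflow m hm 0 ⟨neg_lt_zero.2 hε, hε⟩
      rw [hΦ0 m hm] at h3
      exact h1.unique h3
    have hpart2 : ∀ w : P n, L (0, w) = w := by
      have h2 : HasFDerivAt (fun m' : P n => ((0, m') : ℝ × P n))
          (ContinuousLinearMap.inr ℝ ℝ (P n)) m :=
        (hasFDerivAt_const (0:ℝ) m).prodMk (hasFDerivAt_id m)
      have h1 : HasFDerivAt (fun m' => Φ 0 m')
          (L.comp (ContinuousLinearMap.inr ℝ ℝ (P n))) m :=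
        hΦdiff.hasFDerivAt.comp m h2
      have h3 : HasFDerivAt (fun m' : P n => Φ 0 m') (ContinuousLinearMap.id ℝ (P n)) m := by
        apply (hasFDerivAt_id m).congr_of_eventuallyEq
        filter_upwards [hΩ₀.mem_nhds hm] with m' hm'
        exact hΦ0 m' hm'
      have h4 := h1.unique h3
      intro w
      have h5 := congrArg (fun B : P n →L[ℝ] P n => B w) h4
      simpa using h5
    have hθdiff : DifferentiableAt ℝ θ m :=
      differentiableAt_of_contDiffOn hΩ₀ (k := 0) (hθk 1) hm
    have hpairD : HasFDerivAt (fun ℓ' : P n => ((θ ℓ', ℓ') : ℝ × P n))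
        ((fderiv ℝ θ m).prod (ContinuousLinearMap.id ℝ (P n))) m :=
      hθdiff.hasFDerivAt.prodMk (hasFDerivAt_id m)
    have hΦdiff' : HasFDerivAt (fun q : ℝ × P n => Φ q.1 q.2) L
        ((fun ℓ' : P n => ((θ ℓ', ℓ') : ℝ × P n)) m) := by
      show HasFDerivAt _ L (θ m, m)
      rw [hθ0m]; exact hΦdiff.hasFDerivAt
    have hH2fd : HasFDerivAt H2 (fderiv ℝ H2 m)
        ((fun q : ℝ × P n => Φ q.1 q.2) ((fun ℓ' : P n => ((θ ℓ', ℓ') : ℝ × P n)) m)) := by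
      show HasFDerivAt H2 (fderiv ℝ H2 m) (Φ (θ m) m)
      rw [hθ0m, hΦ0 m hm]; exact (hH2diff m).hasFDerivAt
    have hmid : HasFDerivAt (fun ℓ' : P n => Φ (θ ℓ') ℓ')
        (L.comp ((fderiv ℝ θ m).prod (ContinuousLinearMap.id ℝ (P n)))) m :=
      HasFDerivAt.comp (g := fun q : ℝ × P n => Φ q.1 q.2)
        (f := fun ℓ' : P n => ((θ ℓ', ℓ') : ℝ × P n)) m hΦdiff' hpairD
    have hcomp : HasFDerivAt (fun ℓ' => H2 (Φ (θ ℓ') ℓ'))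
        ((fderiv ℝ H2 m).comp (L.comp
          ((fderiv ℝ θ m).prod (ContinuousLinearMap.id ℝ (P n))))) m :=
      HasFDerivAt.comp (g := H2) (f := fun ℓ' : P n => Φ (θ ℓ') ℓ') m hH2fd hmid
    have hzeroD : fderiv ℝ H2 m (hamVF F1 m) = 0 := by
      rw [fderiv_hamVF (hF1diff m) (hH2diff m), poisson_antisymm, hH23m]
      ring
    have hkey : fderiv ℝ (fun ℓ' => H2 (Φ (θ ℓ') ℓ')) m = fderiv ℝ H2 m := by
      rw [hcomp.fderiv]
      refine ContinuousLinearMap.ext fun w => ?_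
      have hdec : ((fderiv ℝ θ m w • (((1:ℝ), (0 : P n)) : ℝ × P n)
          + (((0:ℝ), w) : ℝ × P n)) : ℝ × P n) = (fderiv ℝ θ m w, w) := by
        simp [Prod.ext_iff]
      calc (fderiv ℝ H2 m) (L ((fderiv ℝ θ m).prod (ContinuousLinearMap.id ℝ (P n)) w))
          = fderiv ℝ H2 m (L (fderiv ℝ θ m w, w)) := rfl
        _ = fderiv ℝ H2 m (L (fderiv ℝ θ m w • (((1:ℝ), (0 : P n)) : ℝ × P n)
              + (((0:ℝ), w) : ℝ × P n))) := by rw [hdec]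
        _ = fderiv ℝ θ m w • fderiv ℝ H2 m (L (1, 0)) + fderiv ℝ H2 m (L (0, w)) := by
              rw [L.map_add, L.map_smul, (fderiv ℝ H2 m).map_add,
                (fderiv ℝ H2 m).map_smul]
        _ = fderiv ℝ H2 m w := by
              rw [hpart1, hpart2 w, hzeroD]
              simp
    rw [hamVF_eq (hHt2diff m hm), hamVF_eq (hH2diff m), hkey]
  -- ## conclusion
  refine ⟨Ω₁, hΩ₁, hℓf, subset_rfl, ?_, ?_, ?_⟩
  · exact fun ℓ hℓ _ => ⟨hpois1 ℓ hℓ, fun t ht => hpois2 t ht ℓ hℓ⟩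
  · -- (ii)
    intro t ht
    have hinv := var_inv (W := fun t => hamVF (fun ℓ' => H2 (Φ (θ ℓ') ℓ') + υ t * F1 ℓ'))
      (V := hamVF (fun ℓ' => H2 (Φ (θ ℓ') ℓ')))
      hΩ₀ hΩ₁ hΩ₁Ω₀ hτ2T hflowC1 hflowT hflowin hflowODE hWcont hWdiffAt hWfd
      (fun m hm => differentiableAt_of_contDiffOn hΩ₀ (k := 1) hamHt2cd hm)
      hamHt2cd.continuousOn hcommHt2 hℓf t ht
    have hm0 : 𝓗 t ℓf ∈ Ω₀ := hflowin ℓf hℓf t ht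
    have hℓf0 : ℓf ∈ Ω₀ := hΩ₁Ω₀ hℓf
    have hH23T : poisson H2 F1 ℓf = 0 := by
      have := hrefH23 T (right_mem_Icc.2 hτ2T.le)
      rwa [hflowT ℓf hℓf] at this
    rw [← hham_eq (𝓗 t ℓf) hm0 (hrefH23 t ht), ← hham_eq ℓf hℓf0 hH23T]
    exact hinv
  · -- (iii)
    intro ℓ hℓ _ t ht
    exact var_inv (W := fun t => hamVF (fun ℓ' => H2 (Φ (θ ℓ') ℓ') + υ t * F1 ℓ'))
      (V := hamVF F1)
      hΩ₀ hΩ₁ hΩ₁Ω₀ hτ2T hflowC1 hflowT hflowin hflowODE hWcont hWdiffAt hWfd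
      (fun m _ => ((hamF1cd 1).differentiable (by norm_cast)).differentiableAt)
      ((hamF1cd 0).continuous.continuousOn) hcommF1 hℓ t ht
end
end
end

section
/- Let λ̂=(p̂,ξ̂) be absolutely continuous on [τ̂₂,T] with λ̂'(t) = ⃗H₂(λ̂(t)) + υ̂(t)⃗F₁(λ̂(t)) for a.e. t, where υ̂:[τ̂₂,T]→[0,1] is measurable, and assume the PMP maximality condition on the singular arc: for every t∈[τ̂₂,T], every a∈[0,1] and every v∈𝒳(ξ̂(t)), ⟨p̂(t), h₂(ξ̂(t)) + a f₁(ξ̂(t))⟩ ≥ ⟨p̂(t), v⟩. Then: (i) F₁(λ̂(t)) = 0 for all t∈[τ̂₂,T]; (ii) H₂₃(λ̂(t)) = 0 for all t∈[τ̂₂,T]; (iii) −H₂₃₂(λ̂(t)) + υ̂(t)·𝔏(λ̂(t)) = 0 for a.e. t∈[τ̂₂,T]. (Necessary conditions 3 of Section 2.1, including equation (5).) -/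
open MeasureTheory Set
open scoped InnerProductSpace NNReal
open InnerProductSpace Topology Filter

noncomputable section

noncomputable section

/-- The standard simplex `Δ ⊆ ℝᵐ`. -/
def simplex (m : ℕ) : Set (Fin m → ℝ) :=
  {u | (∀ i, 0 ≤ u i) ∧ ∑ i, u i = 1}

/-- `𝒳(x)`: the closed convex hull of the values `X₁(x), …, X_m(x)`. -/
def chull {n m : ℕ} (X : Fin m → (E n → E n)) (x : E n) : Set (E n) :=
  {v | ∃ u ∈ simplex m, v = ∑ i, u i • X i x}

variable {n : ℕ}
def lift (h : E n → E n) : P n → ℝ := fun ℓ => ⟪ℓ.1, h ℓ.2⟫_ℝ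
def br (h k : E n → E n) : E n → E n := fun x => fderiv ℝ k x (h x) - fderiv ℝ h x (k x)

lemma inner_gradient (f : E n → ℝ) (x v : E n) :
    ⟪gradient f x, v⟫_ℝ = fderiv ℝ f x v := toDual_symm_apply

lemma hasGrad (w : E n) (q : E n) : HasGradientAt (fun p : E n => ⟪p, w⟫_ℝ) w q := by
  rw [hasGradientAt_iff_hasFDerivAt]
  have : (fun p : E n => ⟪p, w⟫_ℝ) = fun p => (toDual ℝ (E n) w) p := by
    funext q; rw [toDual_apply_apply, real_inner_comm]
  rw [this]
  exact (toDual ℝ (E n) w).hasFDerivAt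

lemma contDiff_br {h k : E n → E n} (hh : ContDiff ℝ (⊤ : ℕ∞) h) (hk : ContDiff ℝ (⊤ : ℕ∞) k) :
    ContDiff ℝ (⊤ : ℕ∞) (br h k) :=
  ((hk.fderiv_right (by simp)).clm_apply hh).sub ((hh.fderiv_right (by simp)).clm_apply hk)


lemma gradP_lift (h : E n → E n) (ℓ : P n) : gradP (lift h) ℓ = h ℓ.2 :=
  (hasGrad (h ℓ.2) ℓ.1).gradient

lemma gradX_lift_inner (h : E n → E n) (hh : Differentiable ℝ h) (ℓ : P n) (v : E n) :
    ⟪gradX (lift h) ℓ, v⟫_ℝ = ⟪ℓ.1, fderiv ℝ h ℓ.2 v⟫_ℝ := by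
  rw [gradX, inner_gradient]
  have hfd : HasFDerivAt (fun x : E n => lift h (ℓ.1, x))
      ((innerSL ℝ ℓ.1).comp (fderiv ℝ h ℓ.2)) ℓ.2 :=
    (innerSL ℝ ℓ.1).hasFDerivAt.comp ℓ.2 (hh ℓ.2).hasFDerivAt
  rw [hfd.fderiv]; rfl

lemma poisson_lift (h k : E n → E n) (hh : Differentiable ℝ h) (hk : Differentiable ℝ k)
    (ℓ : P n) : poisson (lift h) (lift k) ℓ = ⟪ℓ.1, br h k ℓ.2⟫_ℝ := by
  rw [poisson, gradP_lift, gradP_lift, real_inner_comm _ (h ℓ.2),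
    gradX_lift_inner k hk, gradX_lift_inner h hh]
  rw [show br h k ℓ.2 = fderiv ℝ k ℓ.2 (h ℓ.2) - fderiv ℝ h ℓ.2 (k ℓ.2) from rfl,
    inner_sub_right]

lemma hasDerivAt_lift_comp {p ξ : ℝ → E n} {t : ℝ} {D : P n}
    (hD : HasDerivAt (fun s => ((p s, ξ s) : P n)) D t)
    {g : E n → E n} (hg : Differentiable ℝ g) :
    HasDerivAt (fun s => ⟪p s, g (ξ s)⟫_ℝ)
      (⟪p t, fderiv ℝ g (ξ t) D.2⟫_ℝ + ⟪D.1, g (ξ t)⟫_ℝ) t := by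
  have hp : HasDerivAt p D.1 t := by
    exact (ContinuousLinearMap.fst ℝ (E n) (E n)).hasFDerivAt.comp_hasDerivAt t hD
  have hξ : HasDerivAt ξ D.2 t := by
    exact (ContinuousLinearMap.snd ℝ (E n) (E n)).hasFDerivAt.comp_hasDerivAt t hD
  have hgξ : HasDerivAt (fun s => g (ξ s)) (fderiv ℝ g (ξ t) D.2) t :=
    (hg (ξ t)).hasFDerivAt.comp_hasDerivAt t hξ
  exact hp.inner ℝ hgξ

lemma hasDerivAt_poisson {h2f f1f g : E n → E n} (hh2 : Differentiable ℝ h2f)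
    (hf1 : Differentiable ℝ f1f) (hg : Differentiable ℝ g)
    {p ξ : ℝ → E n} {t u : ℝ}
    (hD : HasDerivAt (fun s => ((p s, ξ s) : P n))
      (hamVF (lift h2f) (p t, ξ t) + u • hamVF (lift f1f) (p t, ξ t)) t) :
    HasDerivAt (fun s => ⟪p s, g (ξ s)⟫_ℝ)
      (poisson (lift h2f) (lift g) (p t, ξ t)
        + u * poisson (lift f1f) (lift g) (p t, ξ t)) t := by
  have H := hasDerivAt_lift_comp hD hg
  set ℓ : P n := (p t, ξ t) with hℓ
  have e2 : (hamVF (lift h2f) ℓ + u • hamVF (lift f1f) ℓ).2 = h2f ℓ.2 + u • f1f ℓ.2 := by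
    simp [hamVF, gradP_lift]
  have e1 : (hamVF (lift h2f) ℓ + u • hamVF (lift f1f) ℓ).1
      = -gradX (lift h2f) ℓ + u • (-gradX (lift f1f) ℓ) := by
    simp [hamVF]
  rw [e1, e2] at H
  convert H using 1
  have hpt : ℓ.1 = p t := rfl
  have hxt : ℓ.2 = ξ t := rfl
  rw [← hpt, ← hxt]
  rw [poisson_lift _ _ hh2 hg, poisson_lift _ _ hf1 hg,
    show br h2f g ℓ.2 = fderiv ℝ g ℓ.2 (h2f ℓ.2) - fderiv ℝ h2f ℓ.2 (g ℓ.2) from rfl,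
    show br f1f g ℓ.2 = fderiv ℝ g ℓ.2 (f1f ℓ.2) - fderiv ℝ f1f ℓ.2 (g ℓ.2) from rfl,
    inner_sub_right, inner_sub_right, map_add, (fderiv ℝ g ℓ.2).map_smul,
    inner_add_right, real_inner_smul_right, inner_add_left, inner_neg_left,
    real_inner_smul_left, inner_neg_left,
    ← gradX_lift_inner h2f hh2 ℓ (g ℓ.2), ← gradX_lift_inner f1f hf1 ℓ (g ℓ.2)]
  ring

lemma eq_zero_of_ae_zero {ψ : ℝ → ℝ} {a b : ℝ} (hab : a < b)
    (hc : ContinuousOn ψ (Icc a b))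
    (hae : ∀ᵐ t ∂(volume.restrict (Icc a b)), ψ t = 0) :
    ∀ t ∈ Icc a b, ψ t = 0 := by
  set S : Set ℝ := {s | s ∈ Icc a b ∧ ψ s = 0} with hS
  have hnull : volume ({s | ¬ ψ s = 0} ∩ Icc a b) = 0 := by
    rw [← Measure.restrict_apply' measurableSet_Icc]; exact hae
  intro t ht
  have hclos : t ∈ closure S := by
    by_contra hnc
    rw [mem_closure_iff] at hnc
    push_neg at hnc
    obtain ⟨o, ho, hto, hoS⟩ := hnc
    obtain ⟨ε, hε, hball⟩ := Metric.isOpen_iff.1 ho t hto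
    have hcd : max a (t - ε) < min b (t + ε) := by
      apply max_lt <;> apply lt_min
      · exact hab
      · linarith [ht.1]
      · linarith [ht.2]
      · linarith
    have hsub : Ioo (max a (t - ε)) (min b (t + ε)) ⊆ {s | ¬ ψ s = 0} ∩ Icc a b := by
      intro s hs
      have hs1 : a < s := lt_of_le_of_lt (le_max_left _ _) hs.1
      have hs2 : s < b := lt_of_lt_of_le hs.2 (min_le_left _ _)
      have hs3 : t - ε < s := lt_of_le_of_lt (le_max_right _ _) hs.1
      have hs4 : s < t + ε := lt_of_lt_of_le hs.2 (min_le_right _ _)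
      have hsball : s ∈ o := hball (by
        rw [Metric.mem_ball, Real.dist_eq, abs_lt]; constructor <;> linarith)
      have hsIcc : s ∈ Icc a b := ⟨hs1.le, hs2.le⟩
      refine ⟨fun h0 => ?_, hsIcc⟩
      have : s ∈ o ∩ S := ⟨hsball, hsIcc, h0⟩
      rw [hoS] at this
      exact this
    have hle := measure_mono (μ := volume) hsub
    rw [hnull, Real.volume_Ioo] at hle
    have : (0:ℝ) < min b (t + ε) - max a (t - ε) := by linarith
    exact absurd (le_antisymm hle zero_le) (ENNReal.ofReal_pos.2 this).ne'
  haveI hne : (𝓝[S] t).NeBot := mem_closure_iff_nhdsWithin_neBot.1 hclos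
  have h1 : Filter.Tendsto ψ (𝓝[S] t) (𝓝 (ψ t)) :=
    (hc t ht).mono_left (nhdsWithin_mono t (fun s hs => hs.1))
  have h2 : Filter.Tendsto ψ (𝓝[S] t) (𝓝 0) := by
    refine Filter.Tendsto.congr' ?_ tendsto_const_nhds
    filter_upwards [eventually_mem_nhdsWithin] with s hs
    exact hs.2.symm
  exact tendsto_nhds_unique h1 h2


lemma mem_chull_of_index {m : ℕ} (X : Fin m → (E n → E n)) (x : E n) (j : Fin m) :
    X j x ∈ chull X x := by
  refine ⟨fun i => if i = j then 1 else 0, ⟨fun i => by dsimp only; split <;> norm_num, by simp⟩, by simp⟩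


/-- **Necessary conditions 3 of Section 2.1** (including equation (5)): along the singular
arc the PMP maximality condition forces `F₁(λ̂) ≡ 0`, `H₂₃(λ̂) ≡ 0` and
`−H₂₃₂(λ̂(t)) + υ̂(t)𝔏(λ̂(t)) = 0` a.e. -/
theorem singular_arc_necessary_conditions {n m : ℕ}
    (X : Fin m → (E n → E n)) (hX : ∀ i, ContDiff ℝ (⊤ : ℕ∞) (X i))
    (h2 h3 : E n → E n) (hh2 : ∃ i, h2 = X i) (hh3 : ∃ i, h3 = X i)
    (f1 : E n → E n) (hf1 : f1 = fun x => h3 x - h2 x)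
    (H2 H3 F1 : P n → ℝ)
    (hH2def : H2 = fun ℓ : P n => ⟪ℓ.1, h2 ℓ.2⟫_ℝ)
    (hH3def : H3 = fun ℓ : P n => ⟪ℓ.1, h3 ℓ.2⟫_ℝ)
    (hF1def : F1 = fun ℓ : P n => H3 ℓ - H2 ℓ)
    (τ2 T : ℝ) (hτ2T : τ2 < T)
    (υ : ℝ → ℝ) (hυmeas : Measurable υ) (hυ01 : ∀ t ∈ Icc τ2 T, υ t ∈ Icc (0:ℝ) 1)
    (p ξ : ℝ → E n)
    (hlamcont : ContinuousOn (fun t => ((p t, ξ t) : P n)) (Icc τ2 T))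
    (hlamODE : ∀ᵐ t ∂(volume.restrict (Icc τ2 T)),
      HasDerivAt (fun s => ((p s, ξ s) : P n))
        (hamVF H2 (p t, ξ t) + υ t • hamVF F1 (p t, ξ t)) t)
    -- the PMP maximality condition on the singular arc
    (hmax : ∀ t ∈ Icc τ2 T, ∀ a ∈ Icc (0:ℝ) 1, ∀ v ∈ chull X (ξ t),
      ⟪p t, v⟫_ℝ ≤ ⟪p t, h2 (ξ t)⟫_ℝ + a * ⟪p t, f1 (ξ t)⟫_ℝ) :
    -- (i) F₁ vanishes along the singular arc
    (∀ t ∈ Icc τ2 T, F1 (p t, ξ t) = 0) ∧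
    -- (ii) H₂₃ vanishes along the singular arc
    (∀ t ∈ Icc τ2 T, poisson H2 F1 (p t, ξ t) = 0) ∧
    -- (iii) equation (5)
    (∀ᵐ t ∂(volume.restrict (Icc τ2 T)),
      -poisson H2 (poisson H3 H2) (p t, ξ t)
        + υ t * poisson F1 (poisson H2 F1) (p t, ξ t) = 0) := by
  have hH2lift : H2 = lift h2 := hH2def
  have hH3lift : H3 = lift h3 := hH3def
  have hF1lift : F1 = lift f1 := by
    funext ℓ
    rw [hF1def, hH2def, hH3def, hf1]
    simp only [lift]
    rw [← inner_sub_right]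
  obtain ⟨i2, hi2⟩ := hh2
  obtain ⟨i3, hi3⟩ := hh3
  have hh2c : ContDiff ℝ (⊤ : ℕ∞) h2 := hi2 ▸ hX i2
  have hh3c : ContDiff ℝ (⊤ : ℕ∞) h3 := hi3 ▸ hX i3
  have hf1c : ContDiff ℝ (⊤ : ℕ∞) f1 := by rw [hf1]; exact hh3c.sub hh2c
  have hh2d : Differentiable ℝ h2 := hh2c.differentiable (by simp)
  have hh3d : Differentiable ℝ h3 := hh3c.differentiable (by simp)
  have hf1d : Differentiable ℝ f1 := hf1c.differentiable (by simp)
  set g : E n → E n := br h2 f1 with hgdef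
  have hgc : ContDiff ℝ (⊤ : ℕ∞) g := contDiff_br hh2c hf1c
  have hgd : Differentiable ℝ g := hgc.differentiable (by simp)
  -- part (i)
  have part1 : ∀ t ∈ Icc τ2 T, F1 (p t, ξ t) = 0 := by
    intro t ht
    have m2 : h2 (ξ t) ∈ chull X (ξ t) := by rw [hi2]; exact mem_chull_of_index X _ i2
    have m3 : h3 (ξ t) ∈ chull X (ξ t) := by rw [hi3]; exact mem_chull_of_index X _ i3
    have le1 := hmax t ht 0 ⟨le_refl 0, zero_le_one⟩ _ m3
    have le2 := hmax t ht 1 ⟨zero_le_one, le_refl 1⟩ _ m2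
    have hfe : ⟪p t, f1 (ξ t)⟫_ℝ = ⟪p t, h3 (ξ t)⟫_ℝ - ⟪p t, h2 (ξ t)⟫_ℝ := by
      rw [hf1]; exact inner_sub_right _ _ _
    rw [hfe] at le1 le2
    rw [hF1lift]
    show ⟪p t, f1 (ξ t)⟫_ℝ = 0
    rw [hfe]
    linarith
  -- a.e. interior
  have hae_Ioo : ∀ᵐ t ∂(volume.restrict (Icc τ2 T)), t ∈ Ioo τ2 T := by
    have h1 : ∀ᵐ t ∂(volume.restrict (Icc τ2 T)), t ∈ Icc τ2 T :=
      ae_restrict_mem measurableSet_Icc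
    have hend : (volume.restrict (Icc τ2 T)) {τ2, T} = 0 := by
      apply le_antisymm _ zero_le
      rw [Measure.restrict_apply' measurableSet_Icc]
      calc volume (({τ2, T} : Set ℝ) ∩ Icc τ2 T) ≤ volume ({τ2, T} : Set ℝ) :=
            measure_mono inter_subset_left
        _ = 0 := ((countable_singleton T).insert τ2).measure_zero _
    have h2 : ∀ᵐ t ∂(volume.restrict (Icc τ2 T)), t ∉ ({τ2, T} : Set ℝ) :=
      measure_eq_zero_iff_ae_notMem.mp hend
    filter_upwards [h1, h2] with t ht1 ht2
    refine ⟨lt_of_le_of_ne ht1.1 ?_, lt_of_le_of_ne ht1.2 ?_⟩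
    · exact fun h => ht2 (by simp [h.symm])
    · exact fun h => ht2 (by simp [h])
  -- part (ii) a.e.
  have hP23 : poisson H2 F1 = lift g := by
    funext ℓ
    rw [hH2lift, hF1lift, poisson_lift h2 f1 hh2d hf1d]
    rfl
  have ae2 : ∀ᵐ t ∂(volume.restrict (Icc τ2 T)), poisson H2 F1 (p t, ξ t) = 0 := by
    filter_upwards [hlamODE, hae_Ioo] with t hD htIoo
    rw [hH2lift, hF1lift] at hD
    have hder := hasDerivAt_poisson hh2d hf1d hf1d hD
    have hev : (fun s => ⟪p s, f1 (ξ s)⟫_ℝ) =ᶠ[𝓝 t] fun _ => (0:ℝ) := by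
      filter_upwards [Icc_mem_nhds htIoo.1 htIoo.2] with s hs
      have h0 := part1 s hs
      rw [hF1lift] at h0
      exact h0
    have hzero : HasDerivAt (fun s => ⟪p s, f1 (ξ s)⟫_ℝ) 0 t :=
      (hasDerivAt_const t (0:ℝ)).congr_of_eventuallyEq hev
    have huniq := hzero.unique hder
    have hself : poisson (lift f1) (lift f1) (p t, ξ t) = 0 := by
      rw [poisson, real_inner_comm]; ring
    rw [hself, mul_zero, add_zero] at huniq
    rw [hH2lift, hF1lift]
    exact huniq.symm
  -- part (ii) everywhere
  have part2 : ∀ t ∈ Icc τ2 T, poisson H2 F1 (p t, ξ t) = 0 := by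
    apply eq_zero_of_ae_zero hτ2T _ ae2
    rw [hP23]
    have hpcont : ContinuousOn p (Icc τ2 T) := continuous_fst.comp_continuousOn hlamcont
    have hxcont : ContinuousOn ξ (Icc τ2 T) := continuous_snd.comp_continuousOn hlamcont
    show ContinuousOn (fun t => ⟪p t, g (ξ t)⟫_ℝ) (Icc τ2 T)
    exact hpcont.inner (hgc.continuous.comp_continuousOn hxcont)
  refine ⟨part1, part2, ?_⟩
  -- part (iii)
  have hbrc : ContDiff ℝ (⊤ : ℕ∞) (br h3 h2) := contDiff_br hh3c hh2c
  have hP32 : poisson H3 H2 = lift (br h3 h2) := by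
    funext ℓ; rw [hH3lift, hH2lift, poisson_lift h3 h2 hh3d hh2d]; rfl
  have hbr32_eq : br h3 h2 = fun x => -(g x) := by
    funext x
    have hfd : fderiv ℝ f1 x = fderiv ℝ h3 x - fderiv ℝ h2 x := by
      rw [hf1]; exact fderiv_sub (hh3d x) (hh2d x)
    show fderiv ℝ h2 x (h3 x) - fderiv ℝ h3 x (h2 x)
      = -(fderiv ℝ f1 x (h2 x) - fderiv ℝ h2 x (f1 x))
    rw [hfd, hf1]
    simp only [ContinuousLinearMap.sub_apply, map_sub]
    abel
  have hbr_neg : ∀ ℓ : P n, poisson H2 (poisson H3 H2) ℓ = -poisson (lift h2) (lift g) ℓ := by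
    intro ℓ
    rw [hP32, hH2lift, poisson_lift h2 _ hh2d (hbrc.differentiable (by simp)),
      poisson_lift h2 g hh2d hgd, ← inner_neg_right]
    congr 1
    have hfdneg : fderiv ℝ (br h3 h2) ℓ.2 = -fderiv ℝ g ℓ.2 := by
      rw [hbr32_eq]; exact fderiv_neg
    show fderiv ℝ (br h3 h2) ℓ.2 (h2 ℓ.2) - fderiv ℝ h2 ℓ.2 (br h3 h2 ℓ.2)
      = -(fderiv ℝ g ℓ.2 (h2 ℓ.2) - fderiv ℝ h2 ℓ.2 (g ℓ.2))
    rw [hfdneg, hbr32_eq]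
    simp only [ContinuousLinearMap.neg_apply, map_neg]
    abel
  filter_upwards [hlamODE, hae_Ioo] with t hD htIoo
  rw [hH2lift, hF1lift] at hD
  have hder := hasDerivAt_poisson hh2d hf1d hgd hD
  have hev : (fun s => ⟪p s, g (ξ s)⟫_ℝ) =ᶠ[𝓝 t] fun _ => (0:ℝ) := by
    filter_upwards [Icc_mem_nhds htIoo.1 htIoo.2] with s hs
    have h0 := part2 s hs
    rw [hP23] at h0
    exact h0
  have hzero : HasDerivAt (fun s => ⟪p s, g (ξ s)⟫_ℝ) 0 t :=
    (hasDerivAt_const t (0:ℝ)).congr_of_eventuallyEq hev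
  have huniq := hzero.unique hder
  rw [hP23, hF1lift, hbr_neg (p t, ξ t), neg_neg]
  linarith
end
end
end
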